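/- arXiv:0705.1927 — 7 statements merged into one kernel-verified Lean document; each statement's English description precedes it below -/
import Mathlib

section
/- Let 0 < d < 1/2. Let (a_j)_{j≥1} and (σ(m))_{m∈ℤ} be real sequences with σ(−m) = σ(m), such that for every δ > 0 there are constants C₁(δ) and C₃(δ) with |a_j| ≤ C₁(δ) j^(−d−1+δ) for all j ≥ 1 and |σ(m)| ≤ C₃(δ) |m|^(2d−1+δ) for all m ≠ 0, and σ(0) is finite. Then for every δ > 0, the tail double series satisfies |Σ_{j=k+1}^∞ Σ_{l=k+1}^∞ a_j a_l σ(l − j)| = O(k^(−1+δ)) as k → ∞. -/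
/-!
Take the same exponent `η = min δ 1 / 6` in both hypotheses and write `J = k + 1 + j`,
`L = k + 1 + l`, `m = max |l - j| 1`, so that `m ≤ max J L`. Part of the decay
`(max J L)^(-d-1+η)` pays for the growth `m^(2d+2η)`, which turns `|σ (l - j)|` into a summable
factor `m^(-1-η)` and leaves `(min J L)^(-2+4η) ≤ (k+1)^(-1+5η) * (max (min j l) 1)^(-1-η)`.
What remains is a weight on `ℕ × ℕ` that does not depend on `k` and is summable because
`(j, l) ↦ (min j l, l - j)` is injective.
-/

open Filter Real Asymptotics

noncomputable def absMaxOne (x : ℝ) : ℝ := max |x| 1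

lemma one_le_absMaxOne (x : ℝ) : 1 ≤ absMaxOne x := le_max_right _ _

lemma absMaxOne_pos (x : ℝ) : 0 < absMaxOne x := one_pos.trans_le (one_le_absMaxOne x)

lemma summable_absMaxOne_int_rpow_neg {r : ℝ} (hr : 1 < r) :
    Summable fun m : ℤ => absMaxOne m ^ (-r) := by
  refine (Real.summable_abs_int_rpow hr).congr_cofinite ?_
  filter_upwards [eventually_cofinite_ne 0] with m hm
  have : (1 : ℝ) ≤ |(m : ℝ)| := by exact_mod_cast Int.one_le_abs hm
  rw [absMaxOne, max_eq_left this]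

lemma exists_abs_le_mul_absMaxOne_rpow {σ : ℤ → ℝ} {β : ℝ}
    (h : ∃ C, ∀ m : ℤ, m ≠ 0 → |σ m| ≤ C * (|m| : ℝ) ^ β) :
    ∃ B, ∀ m : ℤ, |σ m| ≤ B * absMaxOne m ^ β := by
  obtain ⟨C, hC⟩ := h
  refine ⟨max C |σ 0|, fun m => ?_⟩
  rcases eq_or_ne m 0 with rfl | hm
  · simp [absMaxOne]
  · have h1 : (1 : ℝ) ≤ |(m : ℝ)| := by exact_mod_cast Int.one_le_abs hm
    rw [absMaxOne, max_eq_left h1]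
    exact (hC m hm).trans (mul_le_mul_of_nonneg_right (le_max_left _ _) (by positivity))

lemma abs_tsum_tsum_le_tsum {β γ : Type*} {F : β → γ → ℝ} {w : β × γ → ℝ} (hw : Summable w)
    (hF : ∀ j l, |F j l| ≤ w (j, l)) : |∑' j, ∑' l, F j l| ≤ ∑' p, w p := by
  have habs : Summable fun p : β × γ => ‖F p.1 p.2‖ :=
    hw.of_nonneg_of_le (fun _ => norm_nonneg _) fun p => (Real.norm_eq_abs _).trans_le (hF p.1 p.2)
  have hsum : Summable fun p : β × γ => F p.1 p.2 := habs.of_norm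
  calc |∑' j, ∑' l, F j l| = ‖∑' p : β × γ, F p.1 p.2‖ := by
        rw [Real.norm_eq_abs, hsum.tsum_prod' fun j => hsum.prod_factor j]
    _ ≤ ∑' p : β × γ, ‖F p.1 p.2‖ := norm_tsum_le_tsum_norm habs
    _ ≤ ∑' p, w p :=
        habs.tsum_le_tsum (fun p => (Real.norm_eq_abs _).trans_le (hF p.1 p.2)) hw

lemma rpow_add_le_mul_rpow_of_nonpos {x u v p q : ℝ} (hu : 0 < u) (hux : u ≤ x) (hv : 0 < v)
    (hvx : v ≤ x) (hp : p ≤ 0) (hq : q ≤ 0) : x ^ (p + q) ≤ u ^ p * v ^ q := by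
  rw [rpow_add (hu.trans_le hux)]
  exact mul_le_mul (rpow_le_rpow_of_nonpos hu hux hp) (rpow_le_rpow_of_nonpos hv hvx hq)
    (rpow_nonneg (hv.le.trans hvx) q) (rpow_nonneg hu.le p)

lemma rpow_mul_rpow_mul_rpow_le {x y m α s γ : ℝ} (hx : 0 < x) (hxy : x ≤ y) (hm : 0 < m)
    (hmy : m ≤ y) (hs : 0 ≤ s) (hαs : α + s ≤ 0) :
    x ^ α * y ^ α * m ^ (s + γ) ≤ x ^ (2 * α + s) * m ^ γ := by
  have hy : 0 < y := hx.trans_le hxy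
  have hym : y ^ α * m ^ s ≤ x ^ (α + s) := calc
    y ^ α * m ^ s ≤ y ^ α * y ^ s := by gcongr
    _ = y ^ (α + s) := (rpow_add hy α s).symm
    _ ≤ x ^ (α + s) := rpow_le_rpow_of_nonpos hx hxy hαs
  calc x ^ α * y ^ α * m ^ (s + γ) = x ^ α * (y ^ α * m ^ s) * m ^ γ := by
        rw [rpow_add hm]; ring
    _ ≤ x ^ α * x ^ (α + s) * m ^ γ := by gcongr
    _ = x ^ (2 * α + s) * m ^ γ := by rw [← rpow_add hx]; ring_nf

lemma rpow_mul_rpow_mul_rpow_le_min {J L m α s γ : ℝ} (hJ : 0 < J) (hL : 0 < L) (hm : 0 < m)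
    (hmJL : m ≤ max J L) (hs : 0 ≤ s) (hαs : α + s ≤ 0) :
    J ^ α * L ^ α * m ^ (s + γ) ≤ min J L ^ (2 * α + s) * m ^ γ := by
  rcases le_total J L with h | h
  · rw [max_eq_right h] at hmJL
    rw [min_eq_left h]
    exact rpow_mul_rpow_mul_rpow_le hJ h hm hmJL hs hαs
  · rw [max_eq_left h] at hmJL
    rw [min_eq_right h, mul_comm (J ^ α)]
    exact rpow_mul_rpow_mul_rpow_le hL h hm hmJL hs hαs

noncomputable def pairWeight (r : ℝ) (p : ℕ × ℕ) : ℝ :=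
  absMaxOne ((min p.1 p.2 : ℕ) : ℤ) ^ (-r) * absMaxOne ((p.2 : ℤ) - p.1 : ℤ) ^ (-r)

lemma summable_pairWeight {r : ℝ} (hr : 1 < r) : Summable (pairWeight r) := by
  have hinj : Function.Injective fun p : ℕ × ℕ => (((min p.1 p.2 : ℕ) : ℤ), (p.2 : ℤ) - p.1) := by
    rintro ⟨j, l⟩ ⟨j', l'⟩ h
    simp only [Prod.mk.injEq] at h ⊢
    push_cast at h
    omega
  have hg := summable_absMaxOne_int_rpow_neg hr
  have hg0 : ∀ m : ℤ, 0 ≤ absMaxOne m ^ (-r) := fun m => rpow_nonneg (absMaxOne_pos _).le _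
  exact ((hg.mul_of_nonneg hg hg0 hg0).comp_injective hinj).congr fun p => rfl

lemma abs_mul_mul_le_pairWeight {a : ℕ → ℝ} {σ : ℤ → ℝ} {d η A B : ℝ}
    (ha : ∀ j : ℕ, 1 ≤ j → |a j| ≤ A * (j : ℝ) ^ (-d - 1 + η))
    (hσ : ∀ m : ℤ, |σ m| ≤ B * absMaxOne m ^ (2 * d - 1 + η))
    (hdη : 0 ≤ d + η) (hdη' : d + 3 * η ≤ 1) (hη : 0 ≤ η) (hη' : 5 * η ≤ 1) (k j l : ℕ) :
    |a (k + 1 + j) * a (k + 1 + l) * σ ((l : ℤ) - j)| ≤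
      A * A * B * ((k : ℝ) + 1) ^ (-1 + 5 * η) * pairWeight (1 + η) (j, l) := by
  have hA : 0 ≤ A := by simpa using (abs_nonneg _).trans (ha 1 le_rfl)
  have hB : 0 ≤ B := by simpa [absMaxOne] using (abs_nonneg _).trans (hσ 0)
  set J : ℝ := ((k + 1 + j : ℕ) : ℝ) with hJdef
  set L : ℝ := ((k + 1 + l : ℕ) : ℝ) with hLdef
  set m : ℝ := absMaxOne (((l : ℤ) - j : ℤ) : ℝ) with hmdef
  have hJ : 0 < J := by positivity
  have hL : 0 < L := by positivity
  have hm : 0 < m := absMaxOne_pos _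
  have hJ' : J = k + 1 + j := by push_cast [hJdef]; rfl
  have hL' : L = k + 1 + l := by push_cast [hLdef]; rfl
  have hk0 : (0 : ℝ) ≤ k := k.cast_nonneg
  have hmJL : m ≤ max J L := by
    refine max_le (abs_le.2 ⟨?_, ?_⟩) ?_ <;> push_cast <;>
      linarith [le_max_left J L, le_max_right J L, j.cast_nonneg (α := ℝ), l.cast_nonneg (α := ℝ)]
  have hkJL : (k : ℝ) + 1 ≤ min J L := le_min (by linarith [j.cast_nonneg (α := ℝ)])
    (by linarith [l.cast_nonneg (α := ℝ)])
  have hjlJL : absMaxOne (min j l : ℕ) ≤ min J L := by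
    refine max_le ?_ (by linarith)
    rw [Nat.abs_cast, Nat.cast_min, hJ', hL']
    exact min_le_min (by linarith) (by linarith)
  have hAAB : 0 ≤ A * A * B := mul_nonneg (mul_self_nonneg A) hB
  calc |a (k + 1 + j) * a (k + 1 + l) * σ ((l : ℤ) - j)|
      = |a (k + 1 + j)| * |a (k + 1 + l)| * |σ ((l : ℤ) - j)| := by rw [abs_mul, abs_mul]
    _ ≤ (A * J ^ (-d - 1 + η)) * (A * L ^ (-d - 1 + η)) * (B * m ^ (2 * d - 1 + η)) := by
        gcongr
        · exact ha (k + 1 + j) (by omega)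
        · exact ha (k + 1 + l) (by omega)
        · exact hσ _
    _ = A * A * B * (J ^ (-d - 1 + η) * L ^ (-d - 1 + η) * m ^ ((2 * d + 2 * η) + -(1 + η))) := by
        ring_nf
    _ ≤ A * A * B * (min J L ^ (2 * (-d - 1 + η) + (2 * d + 2 * η)) * m ^ (-(1 + η))) := by
        refine mul_le_mul_of_nonneg_left ?_ hAAB
        refine rpow_mul_rpow_mul_rpow_le_min hJ hL hm hmJL ?_ ?_ <;> linarith
    _ = A * A * B * (min J L ^ ((-1 + 5 * η) + -(1 + η)) * m ^ (-(1 + η))) := by ring_nf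
    _ ≤ A * A * B * (((k : ℝ) + 1) ^ (-1 + 5 * η) * absMaxOne (min j l : ℕ) ^ (-(1 + η)) *
          m ^ (-(1 + η))) := by
        refine mul_le_mul_of_nonneg_left (mul_le_mul_of_nonneg_right ?_ (by positivity)) hAAB
        refine rpow_add_le_mul_rpow_of_nonpos (by positivity) hkJL (absMaxOne_pos _) hjlJL ?_ ?_ <;>
          linarith
    _ = A * A * B * ((k : ℝ) + 1) ^ (-1 + 5 * η) * pairWeight (1 + η) (j, l) := by
        simp only [pairWeight, Int.cast_natCast, hmdef]; ring

lemma isBigO_nat_add_one_rpow_rpow {p q : ℝ} (hp : p ≤ 0) (hpq : p ≤ q) :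
    (fun k : ℕ => ((k : ℝ) + 1) ^ p) =O[atTop] fun k : ℕ => (k : ℝ) ^ q := by
  refine IsBigO.of_bound 1 ?_
  filter_upwards [eventually_ge_atTop 1] with k hk
  have hk' : (1 : ℝ) ≤ k := by exact_mod_cast hk
  rw [one_mul, Real.norm_of_nonneg (by positivity), Real.norm_of_nonneg (by positivity)]
  calc ((k : ℝ) + 1) ^ p ≤ (k : ℝ) ^ p := rpow_le_rpow_of_nonpos (by positivity) (by linarith) hp
    _ ≤ (k : ℝ) ^ q := rpow_le_rpow_of_exponent_le hk' hpq

theorem stmt_2_general (d : ℝ) (hd0 : 0 < d) (hd2 : d < 1 / 2) (a : ℕ → ℝ) (σ : ℤ → ℝ)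
    (ha : ∀ δ > (0 : ℝ), ∃ C₁ : ℝ, ∀ j : ℕ, 1 ≤ j → |a j| ≤ C₁ * (j : ℝ) ^ (-d - 1 + δ))
    (hσ : ∀ δ > (0 : ℝ), ∃ C₃ : ℝ, ∀ m : ℤ, m ≠ 0 →
      |σ m| ≤ C₃ * (|m| : ℝ) ^ (2 * d - 1 + δ)) :
    ∀ δ > (0 : ℝ),
      (fun k : ℕ => ∑' j : ℕ, ∑' l : ℕ, a (k + 1 + j) * a (k + 1 + l) * σ ((l : ℤ) - j))
        =O[atTop] fun k : ℕ => (k : ℝ) ^ (-1 + δ) := by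
  intro δ hδ
  set η := min δ 1 / 6 with hηdef
  have hη : 0 < η := by positivity
  have hηδ : 5 * η ≤ δ := by linarith [min_le_left δ 1]
  have hη1 : 6 * η ≤ 1 := by linarith [min_le_right δ 1]
  obtain ⟨A, hA⟩ := ha η hη
  obtain ⟨B, hB⟩ := exists_abs_le_mul_absMaxOne_rpow (hσ η hη)
  set C := A * A * B * ∑' p, pairWeight (1 + η) p
  have hbound : ∀ k : ℕ,
      ‖∑' j : ℕ, ∑' l : ℕ, a (k + 1 + j) * a (k + 1 + l) * σ ((l : ℤ) - j)‖ ≤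
        C * ‖((k : ℝ) + 1) ^ (-1 + 5 * η)‖ := fun k => calc
    _ ≤ ∑' p, A * A * B * ((k : ℝ) + 1) ^ (-1 + 5 * η) * pairWeight (1 + η) p :=
        abs_tsum_tsum_le_tsum ((summable_pairWeight (by linarith)).mul_left _) fun j l =>
          abs_mul_mul_le_pairWeight hA hB (by linarith) (by linarith) hη.le (by linarith) k j l
    _ = C * ‖((k : ℝ) + 1) ^ (-1 + 5 * η)‖ := by
        rw [tsum_mul_left, Real.norm_of_nonneg (by positivity)]; ring
  exact (IsBigO.of_bound C (Eventually.of_forall hbound)).trans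
    (isBigO_nat_add_one_rpow_rpow (by linarith) (by linarith))

/-- For `0 < d < 1/2`, if `|a j| ≤ C₁(δ) j^(-d-1+δ)` for `j ≥ 1` and the even
sequence `σ` satisfies `|σ m| ≤ C₃(δ) |m|^(2d-1+δ)` for `m ≠ 0` (for every `δ > 0`), then
for every `δ > 0` the tail double series `∑_{j,l > k} a j * a l * σ (l - j)` is
`O (k ^ (-1 + δ))` as `k → ∞`. -/
theorem stmt_2 (d : ℝ) (hd0 : 0 < d) (hd2 : d < 1 / 2) (a : ℕ → ℝ) (σ : ℤ → ℝ)
    (hσeven : ∀ m : ℤ, σ (-m) = σ m)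
    (ha : ∀ δ > (0 : ℝ), ∃ C₁ : ℝ, ∀ j : ℕ, 1 ≤ j → |a j| ≤ C₁ * (j : ℝ) ^ (-d - 1 + δ))
    (hσ : ∀ δ > (0 : ℝ), ∃ C₃ : ℝ, ∀ m : ℤ, m ≠ 0 →
      |σ m| ≤ C₃ * (|m| : ℝ) ^ (2 * d - 1 + δ)) :
    ∀ δ > (0 : ℝ),
      (fun k : ℕ => ∑' j : ℕ, ∑' l : ℕ, a (k + 1 + j) * a (k + 1 + l) * σ ((l : ℤ) - j))
        =O[atTop] fun k : ℕ => (k : ℝ) ^ (-1 + δ) :=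
  stmt_2_general d hd0 hd2 a σ ha hσ
end

section
/- Let (Ω, F, P) be a probability space and (ε_n)_{n∈ℤ} a family of real random variables in L²(P) with E[ε_n] = 0, E[ε_n ε_m] = σ_ε² · 1_{n=m}, where σ_ε² > 0. Let (a_j)_{j≥0} and (b_j)_{j≥0} be real sequences with a_0 = b_0 = 1, Σ_j |a_j| < ∞ and Σ_j b_j² < ∞, and suppose that for every n the series X_n := Σ_{j=0}^∞ b_j ε_{n−j} converges in L²(P) and that ε_n = Σ_{j=0}^∞ a_j X_{n−j} with convergence in L²(P). Let σ(m) := E[X_n X_{n+m}] (independent of n). Then for every k ≥ 1, the truncated Wiener–Kolmogorov predictor X'_k(1) := −Σ_{j=1}^k a_j X_{k+1−j} satisfies E[(X_{k+1} − X'_k(1))²] = σ_ε² + Σ_{j=k+1}^∞ Σ_{l=k+1}^∞ a_j a_l σ(l − j), the double series converging absolutely. -/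
/-!
Pass to `L²(P)`. The MA(∞) representation makes `ε n` orthogonal to every `X m` with `m < n`.
Splitting the AR(∞) series for `ε (k+1)` after its first `k + 1` terms gives
`ε (k+1) = G + T`, where `G = X (k+1) - X'_k(1)` is the prediction error and
`T = ∑_{j > k} a j • X (k+1-j)` lies in the closed span of the past. Hence `T ⊥ ε (k+1)`, so
`‖G‖² = ‖ε (k+1)‖² + ‖T‖² = σε2 + ‖T‖²`, and `‖T‖²` expands into the double series of
autocovariances, which converges absolutely because `|σ m| ≤ σ 0` and `∑ |a j| < ∞`.
-/

open Filter MeasureTheory Finset Topology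
open scoped RealInnerProductSpace

section InnerProductSpace

variable {E : Type*} [NormedAddCommGroup E] [InnerProductSpace ℝ E]

theorem inner_eq_zero_of_tendsto_sum {u : ℕ → E} {v T : E}
    (hT : Tendsto (fun N ↦ ∑ j ∈ range N, u j) atTop (𝓝 T)) (h : ∀ j, ⟪v, u j⟫ = 0) :
    ⟪v, T⟫ = 0 :=
  tendsto_nhds_unique (tendsto_const_nhds.inner hT) (by simp [inner_sum, h])

theorem inner_self_eq_tsum_of_tendsto_sum {u : ℕ → E} {T : E}
    (hT : Tendsto (fun N ↦ ∑ j ∈ range N, u j) atTop (𝓝 T))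
    (hu : Summable fun p : ℕ × ℕ ↦ ⟪u p.1, u p.2⟫) :
    ⟪T, T⟫ = ∑' p : ℕ × ℕ, ⟪u p.1, u p.2⟫ := by
  have hsquares : Tendsto (fun N ↦ range N ×ˢ range N) atTop atTop :=
    tendsto_atTop_finset_of_monotone (fun _ _ h ↦ product_subset_product
      (range_subset_range.2 h) (range_subset_range.2 h))
      fun p ↦ ⟨max p.1 p.2 + 1, by simp⟩
  refine tendsto_nhds_unique (hT.inner hT) ((hu.hasSum.comp hsquares).congr fun N ↦ ?_)
  simp only [Function.comp_apply, sum_product, sum_inner, inner_sum]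
  exact sum_comm

theorem abs_le_apply_zero_of_inner_eq {x : ℤ → E} {σ : ℤ → ℝ}
    (hx : ∀ n m, ⟪x n, x m⟫ = σ (m - n)) (m : ℤ) : |σ m| ≤ σ 0 := by
  have hnorm : ∀ n, ‖x n‖ ^ 2 = σ 0 := fun n ↦ by
    rw [← real_inner_self_eq_norm_sq, hx, sub_self]
  calc |σ m| = |⟪x 0, x m⟫| := by rw [hx, sub_zero]
    _ ≤ ‖x 0‖ * ‖x m‖ := abs_real_inner_le_norm _ _
    _ = ‖x 0‖ ^ 2 := by
      rw [sq, (sq_eq_sq₀ (norm_nonneg _) (norm_nonneg _)).1 ((hnorm m).trans (hnorm 0).symm)]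
    _ = σ 0 := hnorm 0

theorem norm_sq_sum_range_eq_of_tendsto {y : ℕ → E} {c : ℕ → ℝ} {e : E} (k : ℕ)
    (he : Tendsto (fun N ↦ ∑ j ∈ range N, c j • y j) atTop (𝓝 e))
    (horth : ∀ j, k < j → ⟪e, y j⟫ = 0)
    (hsum : Summable fun p : ℕ × ℕ ↦
      c (k + 1 + p.1) * c (k + 1 + p.2) * ⟪y (k + 1 + p.1), y (k + 1 + p.2)⟫) :
    ‖∑ j ∈ range (k + 1), c j • y j‖ ^ 2 = ‖e‖ ^ 2 +
      ∑' p : ℕ × ℕ, c (k + 1 + p.1) * c (k + 1 + p.2) * ⟪y (k + 1 + p.1), y (k + 1 + p.2)⟫ := by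
  set G := ∑ j ∈ range (k + 1), c j • y j
  have htail : Tendsto (fun N ↦ ∑ j ∈ range N, c (k + 1 + j) • y (k + 1 + j)) atTop
      (𝓝 (e - G)) := by
    refine (((tendsto_add_atTop_iff_nat (k + 1)).2 he).sub_const G).congr fun N ↦ ?_
    rw [add_comm N, sum_range_add, add_sub_cancel_left]
  have horthTail : ⟪e, e - G⟫ = 0 := inner_eq_zero_of_tendsto_sum htail fun j ↦ by
    rw [real_inner_smul_right, horth _ (by omega), mul_zero]
  have hinner : ∀ i l, ⟪c (k + 1 + i) • y (k + 1 + i), c (k + 1 + l) • y (k + 1 + l)⟫ =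
      c (k + 1 + i) * c (k + 1 + l) * ⟪y (k + 1 + i), y (k + 1 + l)⟫ := fun i l ↦ by
    rw [real_inner_smul_left, real_inner_smul_right, mul_assoc]
  have hnormTail := inner_self_eq_tsum_of_tendsto_sum htail (by simpa only [hinner] using hsum)
  simp only [hinner, real_inner_self_eq_norm_sq] at hnormTail
  rw [← hnormTail, sq, sq, sq, ← norm_sub_sq_eq_norm_sq_add_norm_sq_real horthTail,
    sub_sub_cancel]

end InnerProductSpace

section L2

variable {Ω : Type*} [MeasurableSpace Ω] {P : Measure Ω}

theorem coeFn_sum_smul_toLp {ι : Type*} {p : ENNReal} [Fact (1 ≤ p)] {f : ι → Ω → ℝ}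
    (hf : ∀ i, MemLp (f i) p P) (c : ι → ℝ) (s : Finset ι) :
    ⇑(∑ i ∈ s, c i • (hf i).toLp (f i)) =ᵐ[P] fun ω ↦ ∑ i ∈ s, c i * f i ω := by
  filter_upwards [Lp.coeFn_finsetSum s fun i ↦ c i • (hf i).toLp (f i),
    (eventually_all_finset s).2 fun i _ ↦
      (Lp.coeFn_smul (c i) ((hf i).toLp (f i))).and (hf i).coeFn_toLp] with ω hsum hterm
  rw [hsum, Finset.sum_apply]
  refine sum_congr rfl fun i hi ↦ ?_
  rw [(hterm i hi).1, Pi.smul_apply, (hterm i hi).2, smul_eq_mul]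

theorem tendsto_sum_smul_toLp {p : ENNReal} [Fact (1 ≤ p)] {f : ℕ → Ω → ℝ}
    (hf : ∀ j, MemLp (f j) p P) (c : ℕ → ℝ) {g : Ω → ℝ} (hg : MemLp g p P)
    (h : Tendsto (fun N ↦ eLpNorm (fun ω ↦ g ω - ∑ j ∈ range N, c j * f j ω) p P) atTop (𝓝 0)) :
    Tendsto (fun N ↦ ∑ j ∈ range N, c j • (hf j).toLp (f j)) atTop (𝓝 (hg.toLp g)) := by
  rw [Lp.tendsto_Lp_iff_tendsto_eLpNorm _ g hg]
  refine h.congr fun N ↦ ?_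
  rw [eLpNorm_sub_comm]
  exact eLpNorm_congr_ae (EventuallyEq.rfl.sub (coeFn_sum_smul_toLp hf c _).symm)

theorem MeasureTheory.L2.inner_eq_integral_of_ae {F G : Lp ℝ 2 P} {f g : Ω → ℝ} (hF : F =ᵐ[P] f)
    (hG : G =ᵐ[P] g) : ⟪F, G⟫ = ∫ ω, f ω * g ω ∂P := by
  rw [L2.inner_def]
  refine integral_congr_ae ?_
  filter_upwards [hF, hG] with ω hFω hGω
  rw [hFω, hGω, Real.inner_apply]

end L2

theorem summable_abs_mul_mul_of_abs_le {c : ℕ → ℝ} (hc : Summable fun j ↦ |c j|)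
    {g : ℕ × ℕ → ℝ} {C : ℝ} (hg : ∀ p, |g p| ≤ C) :
    Summable fun p : ℕ × ℕ ↦ |c p.1 * c p.2 * g p| := by
  have hC : 0 ≤ C := (abs_nonneg _).trans (hg (0, 0))
  refine Summable.of_nonneg_of_le (fun _ ↦ abs_nonneg _) (fun p ↦ ?_)
    ((Summable.mul_of_nonneg hc hc (fun _ ↦ abs_nonneg _) (fun _ ↦ abs_nonneg _)).mul_right C)
  rw [abs_mul, abs_mul]
  exact mul_le_mul_of_nonneg_left (hg p) (by positivity)

theorem stmt_3_general {Ω : Type*} [MeasurableSpace Ω] (P : Measure Ω)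
    (ε X : ℤ → Ω → ℝ) (σε2 : ℝ) (a b : ℕ → ℝ) (σ : ℤ → ℝ)
    (hε2 : ∀ n, MemLp (ε n) 2 P) (hX2 : ∀ n, MemLp (X n) 2 P)
    (hcov : ∀ n m, ∫ ω, ε n ω * ε m ω ∂P = if n = m then σε2 else 0)
    (ha0 : a 0 = 1)
    (haSum : Summable fun j => |a j|)
    (hMA : ∀ n : ℤ, Tendsto
      (fun N : ℕ => eLpNorm (fun ω => X n ω - ∑ j ∈ Finset.range N, b j * ε (n - j) ω) 2 P)
      atTop (nhds 0))
    (hAR : ∀ n : ℤ, Tendsto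
      (fun N : ℕ => eLpNorm (fun ω => ε n ω - ∑ j ∈ Finset.range N, a j * X (n - j) ω) 2 P)
      atTop (nhds 0))
    (hσ : ∀ n m : ℤ, ∫ ω, X n ω * X (n + m) ω ∂P = σ m) :
    ∀ k : ℕ, 1 ≤ k →
      Summable (fun p : ℕ × ℕ =>
        |a (k + 1 + p.1) * a (k + 1 + p.2) * σ ((p.2 : ℤ) - p.1)|) ∧
      ∫ ω, (X ((k : ℤ) + 1) ω - (- ∑ j ∈ Finset.Icc 1 k, a j * X ((k : ℤ) + 1 - j) ω)) ^ 2 ∂P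
        = σε2 + ∑' j : ℕ, ∑' l : ℕ, a (k + 1 + j) * a (k + 1 + l) * σ ((l : ℤ) - j) := by
  intro k _
  set x : ℤ → Lp ℝ 2 P := fun n ↦ (hX2 n).toLp (X n)
  set e : ℤ → Lp ℝ 2 P := fun n ↦ (hε2 n).toLp (ε n)
  have hxx : ∀ n m, ⟪x n, x m⟫ = σ (m - n) := fun n m ↦ by
    rw [L2.inner_eq_integral_of_ae (hX2 n).coeFn_toLp (hX2 m).coeFn_toLp, ← hσ n, add_sub_cancel]
  have hee : ∀ n m, ⟪e n, e m⟫ = if n = m then σε2 else 0 := fun n m ↦ by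
    rw [L2.inner_eq_integral_of_ae (hε2 n).coeFn_toLp (hε2 m).coeFn_toLp, hcov]
  have hex : ∀ n m, m < n → ⟪e n, x m⟫ = 0 := fun n m hmn ↦
    inner_eq_zero_of_tendsto_sum (tendsto_sum_smul_toLp (fun j ↦ hε2 (m - j)) b (hX2 m) (hMA m))
      fun j ↦ by rw [real_inner_smul_right, hee, if_neg (by omega), mul_zero]
  have hsum := summable_abs_mul_mul_of_abs_le (c := fun j ↦ a (k + 1 + j))
    (((summable_nat_add_iff (k + 1)).2 haSum).congr fun j ↦ by rw [add_comm])
    fun p ↦ abs_le_apply_zero_of_inner_eq hxx ((p.2 : ℤ) - p.1)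
  refine ⟨hsum, ?_⟩
  set K : ℤ := (k : ℤ) + 1
  have hlhs : ∫ ω, (X K ω - (- ∑ j ∈ Finset.Icc 1 k, a j * X (K - j) ω)) ^ 2 ∂P
      = ‖∑ j ∈ range (k + 1), a j • x (K - j)‖ ^ 2 := by
    have hG := coeFn_sum_smul_toLp (fun j : ℕ ↦ hX2 (K - j)) a (range (k + 1))
    rw [← real_inner_self_eq_norm_sq, L2.inner_eq_integral_of_ae hG hG]
    refine integral_congr_ae (Eventually.of_forall fun ω ↦ ?_)
    dsimp only
    rw [Nat.range_succ_eq_Icc_zero, ← insert_Icc_add_one_left_eq_Icc k.zero_le, zero_add,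
      sum_insert (by simp), ha0, Nat.cast_zero, sub_zero, one_mul, sub_neg_eq_add, sq]
  have hyy : ∀ i l : ℕ, ⟪x (K - ↑(k + 1 + i)), x (K - ↑(k + 1 + l))⟫ = σ (l - i) := fun i l ↦ by
    rw [real_inner_comm, hxx]
    congr 1
    push_cast
    ring
  rw [hlhs, norm_sq_sum_range_eq_of_tendsto (y := fun j ↦ x (K - j)) k
      (tendsto_sum_smul_toLp (fun j ↦ hX2 (K - j)) a (hε2 K) (hAR K))
      (fun j hj ↦ hex K _ (by omega)) (by simpa only [hyy] using hsum.of_abs)]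
  simp only [hyy]
  rw [← real_inner_self_eq_norm_sq, hee, if_pos rfl, hsum.of_abs.tsum_prod]

/-- For a white noise `(ε n)` with variance `σε2`, a linear process
`X n = ∑ b j ε (n - j)` (in L²) with AR(∞) representation `ε n = ∑ a j X (n - j)` (in L²),
`a 0 = b 0 = 1`, `∑ |a j| < ∞`, `∑ b j ² < ∞`, and autocovariance `σ m = E[X n X (n+m)]`,
the truncated Wiener–Kolmogorov predictor `X'_k(1) = -∑_{j=1}^k a j X (k+1-j)` satisfies
`E[(X (k+1) - X'_k(1))²] = σε2 + ∑_{j,l ≥ k+1} a j a l σ (l - j)`, the double series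
converging absolutely. -/
theorem stmt_3 {Ω : Type*} [MeasurableSpace Ω] (P : Measure Ω) [IsProbabilityMeasure P]
    (ε X : ℤ → Ω → ℝ) (σε2 : ℝ) (hσε2 : 0 < σε2) (a b : ℕ → ℝ) (σ : ℤ → ℝ)
    (hε2 : ∀ n, MemLp (ε n) 2 P) (hX2 : ∀ n, MemLp (X n) 2 P)
    (hmean : ∀ n, ∫ ω, ε n ω ∂P = 0)
    (hcov : ∀ n m, ∫ ω, ε n ω * ε m ω ∂P = if n = m then σε2 else 0)
    (ha0 : a 0 = 1) (hb0 : b 0 = 1)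
    (haSum : Summable fun j => |a j|) (hbSum : Summable fun j => (b j) ^ 2)
    (hMA : ∀ n : ℤ, Tendsto
      (fun N : ℕ => eLpNorm (fun ω => X n ω - ∑ j ∈ Finset.range N, b j * ε (n - j) ω) 2 P)
      atTop (nhds 0))
    (hAR : ∀ n : ℤ, Tendsto
      (fun N : ℕ => eLpNorm (fun ω => ε n ω - ∑ j ∈ Finset.range N, a j * X (n - j) ω) 2 P)
      atTop (nhds 0))
    (hσ : ∀ n m : ℤ, ∫ ω, X n ω * X (n + m) ω ∂P = σ m) :
    ∀ k : ℕ, 1 ≤ k →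
      Summable (fun p : ℕ × ℕ =>
        |a (k + 1 + p.1) * a (k + 1 + p.2) * σ ((p.2 : ℤ) - p.1)|) ∧
      ∫ ω, (X ((k : ℤ) + 1) ω - (- ∑ j ∈ Finset.Icc 1 k, a j * X ((k : ℤ) + 1 - j) ω)) ^ 2 ∂P
        = σε2 + ∑' j : ℕ, ∑' l : ℕ, a (k + 1 + j) * a (k + 1 + l) * σ ((l : ℤ) - j) :=
  stmt_3_general P ε X σε2 a b σ hε2 hX2 hcov ha0 haSum hMA hAR hσ
end

section
/- For 0 < d < 1/2 and σ_ε² > 0, let a_0 = 1, a_l = Γ(l−d)/(Γ(l+1)Γ(−d)) for l ≥ 1, and σ(m) = σ_ε² Γ(1−2d) Γ(|m|+d)/(Γ(d) Γ(1−d) Γ(|m|+1−d)) for m ∈ ℤ. Then for every integer j ≥ 1, the series Σ_{l=0}^∞ a_l σ(l − j) converges absolutely and equals 0. -/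
/-!
By the reflection formula, `Γ(m+d)/Γ(m+1-d)` is even in `m ∈ ℤ`, so `σ(l-j)` is given by the
same formula for all `l`. Chu–Vandermonde then writes `a_l σ(l-j)` as a finite combination,
over `i < j`, of `Γ(l+b)/Γ(l+1)` with `b = d-1-i < 0`, the terms of the binomial series of
`Γ(b) (1-x)^(-b)` at `x = 1`. Their partial sums telescope to `Γ(N+1+b)/(b Γ(N+1)) ~ N^b/b`,
which tends to `0`. Finally `a_l < 0` for `l ≥ 1` while `σ > 0`, so all terms after the first
have one sign and convergence of the partial sums is absolute convergence.
-/

open Real Finset Filter Topology Polynomial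

theorem ascPochhammer_eval_eq_prod_range {R : Type*} [CommSemiring R] (n : ℕ) (r : R) :
    (ascPochhammer R n).eval r = ∏ j ∈ range n, (r + j) := by
  induction n with
  | zero => simp
  | succ n ih => simp [ascPochhammer_succ_right, ih, ← Finset.prod_range_succ]

theorem ascPochhammer_eval_add {R : Type*} [CommRing R] (x y : R) (n : ℕ) :
    (ascPochhammer R n).eval (x + y) = ∑ i ∈ range (n + 1),
      (n.choose i : R) * ((ascPochhammer R i).eval x * (ascPochhammer R (n - i)).eval y) := by
  have h_desc (k : ℕ) (z : R) :
      (ascPochhammer R k).eval z = (-1) ^ k * (descPochhammer ℤ k).smeval (-z) := by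
    rw [← neg_neg z, ascPochhammer_eval_neg_eq_descPochhammer, neg_neg,
      descPochhammer_eval_eq_ascPochhammer, descPochhammer_smeval_eq_ascPochhammer,
      ascPochhammer_smeval_eq_eval]
  rw [h_desc, neg_add, Ring.descPochhammer_smeval_add _ (Commute.all _ _),
    Nat.sum_antidiagonal_eq_sum_range_succ (fun i k => (n.choose i : R) *
      ((descPochhammer ℤ i).smeval (-x) * (descPochhammer ℤ k).smeval (-y))), mul_sum]
  refine sum_congr rfl fun i hi => ?_
  rw [h_desc, h_desc, ← Nat.add_sub_of_le (Nat.lt_succ_iff.mp (mem_range.mp hi)), pow_add,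
    Nat.add_sub_cancel_left]
  ring

namespace Real

theorem Gamma_add_nat_eq_ascPochhammer_mul {z : ℝ} (hz : ∀ m : ℕ, z ≠ -m) (n : ℕ) :
    Gamma (z + n) = (ascPochhammer ℝ n).eval z * Gamma z := by
  induction n with
  | zero => simp
  | succ n ih =>
    have hzn : z + n ≠ 0 := fun h => hz n (by linarith)
    rw [Nat.cast_succ, ← add_assoc, Gamma_add_one hzn, ih, ascPochhammer_succ_eval]
    ring

theorem Gamma_mul_Gamma_one_sub_sub_intCast (s : ℝ) (n : ℤ) :
    Gamma (s - n) * Gamma (1 - (s - n)) = Gamma (s + n) * Gamma (1 - (s + n)) := by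
  rw [Gamma_mul_Gamma_one_sub, Gamma_mul_Gamma_one_sub, ← sin_add_int_mul_two_pi _ n]
  ring_nf

theorem Gamma_add_add_nat_mul_Gamma {x y : ℝ} (hy : ∀ m : ℕ, y ≠ -m)
    (hxy : ∀ m : ℕ, x + y ≠ -m) (n : ℕ) :
    Gamma (x + y + n) * Gamma y = Gamma (x + y) * ∑ i ∈ range (n + 1),
      (n.choose i : ℝ) * (ascPochhammer ℝ i).eval x * Gamma (y + (n - i : ℕ)) := by
  rw [Gamma_add_nat_eq_ascPochhammer_mul hxy, ascPochhammer_eval_add, sum_mul, sum_mul, mul_sum]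
  refine sum_congr rfl fun i _ => ?_
  rw [Gamma_add_nat_eq_ascPochhammer_mul hy]
  ring

theorem tendsto_Gamma_nat_add_one_add_div_Gamma_nat_add_one {b : ℝ} (hb : ∀ m : ℕ, b ≠ -m)
    (hb0 : b < 0) :
    Tendsto (fun n : ℕ => Gamma (n + 1 + b) / Gamma (n + 1)) atTop (𝓝 0) := by
  have hΓ : Gamma b ≠ 0 := Gamma_ne_zero hb
  -- Euler's limit formula `GammaSeq b n → Γ(b)`, while `n ^ b → 0`
  have h_lim : Tendsto (fun n : ℕ => Gamma b * (n : ℝ) ^ b / GammaSeq b n) atTop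
      (𝓝 (Gamma b * 0 / Gamma b)) := by
    refine (tendsto_const_nhds.mul ?_).div (GammaSeq_tendsto_Gamma b) hΓ
    simpa [Function.comp_def] using
      (tendsto_rpow_neg_atTop (neg_pos.mpr hb0)).comp tendsto_natCast_atTop_atTop
  rw [mul_zero, zero_div] at h_lim
  refine h_lim.congr' (eventually_atTop.mpr ⟨1, fun n hn => ?_⟩)
  dsimp only
  have hn0 : (n : ℝ) ^ b ≠ 0 := (rpow_pos_of_pos (by exact_mod_cast hn) b).ne'
  have hprod : Gamma (n + 1 + b) = (∏ j ∈ range (n + 1), (b + j)) * Gamma b := by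
    rw [← ascPochhammer_eval_eq_prod_range, ← Gamma_add_nat_eq_ascPochhammer_mul hb]
    push_cast; ring_nf
  have hP : ∏ j ∈ range (n + 1), (b + j) ≠ 0 :=
    prod_ne_zero_iff.mpr fun j _ h => hb j (by linarith)
  rw [GammaSeq, hprod, Gamma_nat_eq_factorial]
  field_simp

theorem sum_range_succ_Gamma_add_div_Gamma_add_one {b : ℝ} (hb : ∀ m : ℕ, b ≠ -m)
    (N : ℕ) :
    ∑ l ∈ range (N + 1), Gamma (l + b) / Gamma (l + 1) =
      Gamma (N + 1 + b) / Gamma (N + 1) / b := by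
  have hb0 : b ≠ 0 := by simpa using hb 0
  induction N with
  | zero =>
    rw [sum_range_one, Nat.cast_zero, zero_add, zero_add, add_comm, Gamma_add_one hb0,
      Gamma_one]
    field_simp
  | succ N ih =>
    have hNb : (N : ℝ) + 1 + b ≠ 0 := fun h => hb (N + 1) (by push_cast; linarith)
    have hN : (N : ℝ) + 1 ≠ 0 := by positivity
    have hΓN : Gamma (N + 1) ≠ 0 := (Gamma_pos_of_pos (by positivity)).ne'
    rw [sum_range_succ, ih]
    push_cast
    rw [Gamma_add_one hN, show (N : ℝ) + 1 + 1 + b = N + 1 + b + 1 by ring, Gamma_add_one hNb]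
    field_simp

theorem tendsto_sum_range_Gamma_add_div_Gamma_add_one {b : ℝ} (hb : ∀ m : ℕ, b ≠ -m)
    (hb0 : b < 0) :
    Tendsto (fun N : ℕ => ∑ l ∈ range N, Gamma (l + b) / Gamma (l + 1)) atTop (𝓝 0) := by
  rw [← tendsto_add_atTop_iff_nat 1]
  simp_rw [sum_range_succ_Gamma_add_div_Gamma_add_one hb]
  simpa using (tendsto_Gamma_nat_add_one_add_div_Gamma_nat_add_one hb hb0).div_const b

theorem Gamma_neg_of_pos_of_lt_one {d : ℝ} (h0 : 0 < d) (h1 : d < 1) : Gamma (-d) < 0 := by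
  have h := Gamma_add_one (neg_ne_zero.mpr h0.ne')
  have h_pos : 0 < Gamma (-d + 1) := Gamma_pos_of_pos (by linarith)
  nlinarith

end Real

theorem summable_abs_and_hasSum_of_tendsto_of_succ_nonpos {f : ℕ → ℝ} {s : ℝ}
    (hf : ∀ l, f (l + 1) ≤ 0) (hs : Tendsto (fun n => ∑ i ∈ range n, f i) atTop (𝓝 s)) :
    Summable (fun l => |f l|) ∧ HasSum f s := by
  have h_tail : HasSum (fun l => -f (l + 1)) (f 0 - s) := by
    refine (hasSum_iff_tendsto_nat_of_nonneg (fun l => neg_nonneg.mpr (hf l)) _).mpr ?_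
    refine (tendsto_const_nhds.sub ((tendsto_add_atTop_iff_nat 1).mpr hs)).congr fun n => ?_
    rw [sum_range_succ', sum_neg_distrib]
    ring
  have h_abs : Summable (fun l => |f l|) :=
    (summable_nat_add_iff 1).mp (h_tail.summable.congr fun l => (abs_of_nonpos (hf l)).symm)
  obtain ⟨t, ht⟩ := h_abs.of_abs
  exact ⟨h_abs, tendsto_nhds_unique ht.tendsto_sum_nat hs ▸ ht⟩

theorem ne_intCast_of_pos_of_lt_one {d : ℝ} (h0 : 0 < d) (h1 : d < 1) (n : ℤ) : d ≠ n := by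
  rintro rfl
  have : (0 : ℤ) < n := by exact_mod_cast h0
  have : n < 1 := by exact_mod_cast h1
  omega

theorem intCast_add_ne_neg_natCast {s : ℝ} (hs : ∀ n : ℤ, s ≠ n) (n : ℤ) (m : ℕ) :
    (n : ℝ) + s ≠ -m :=
  fun h => hs (-m - n) (by push_cast; linarith)

namespace FracNoise

noncomputable def arCoeff (d : ℝ) (l : ℕ) : ℝ := Gamma (l - d) / (Gamma (l + 1) * Gamma (-d))

/-- `σ(m) = σ_ε² Γ(1-2d) / (Γ(d) Γ(1-d)) * acvfShape d m`. For `m < 0` this is the formula at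
`m` itself rather than at `|m|`; the two agree by the reflection formula (`acvfShape_abs`). -/
noncomputable def acvfShape (d : ℝ) (m : ℤ) : ℝ := Gamma (m + d) / Gamma (m + 1 - d)

variable {d : ℝ}

theorem arCoeff_zero (hd : Gamma (-d) ≠ 0) : arCoeff d 0 = 1 := by
  simp [arCoeff, hd]

theorem arCoeff_succ_neg (h0 : 0 < d) (h1 : d < 1) (l : ℕ) : arCoeff d (l + 1) < 0 := by
  refine div_neg_of_pos_of_neg (Gamma_pos_of_pos ?_) (mul_neg_of_pos_of_neg
    (Gamma_pos_of_pos (by positivity)) (Gamma_neg_of_pos_of_lt_one h0 h1))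
  push_cast
  linarith [(l.cast_nonneg : (0 : ℝ) ≤ l)]

theorem acvfShape_abs (hd : ∀ n : ℤ, d ≠ n) (m : ℤ) : acvfShape d |m| = acvfShape d m := by
  rcases abs_choice m with h | h
  · rw [h]
  have h_ne (n : ℤ) : Gamma (n + 1 - d) ≠ 0 := Gamma_ne_zero fun k hk =>
    intCast_add_ne_neg_natCast hd (-k - n - 1) 0 (by push_cast; linarith)
  rw [h, acvfShape, acvfShape, div_eq_div_iff (h_ne _) (h_ne _)]
  have := Gamma_mul_Gamma_one_sub_sub_intCast d m
  push_cast
  convert this using 2 <;> ring_nf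

theorem acvfShape_pos (h0 : 0 < d) (h1 : d < 1) (m : ℤ) : 0 < acvfShape d m := by
  rw [← acvfShape_abs (ne_intCast_of_pos_of_lt_one h0 h1)]
  have : (0 : ℝ) ≤ (|m| : ℤ) := by exact_mod_cast abs_nonneg m
  exact div_pos (Gamma_pos_of_pos (by linarith)) (Gamma_pos_of_pos (by linarith))

theorem arCoeff_mul_acvfShape_eq_sum (hd : ∀ n : ℤ, d ≠ n) (k l : ℕ) :
    arCoeff d l * acvfShape d (l - (k + 1 : ℕ)) = (Gamma (-d))⁻¹ * ∑ i ∈ range (k + 1),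
      (k.choose i : ℝ) * (ascPochhammer ℝ i).eval (1 - 2 * d) *
        (Gamma (l + (d - 1 - i)) / Gamma (l + 1)) := by
  have hy : ∀ m : ℕ, (l - (k + 1) + d : ℝ) ≠ -m := by
    simpa using intCast_add_ne_neg_natCast hd (l - (k + 1))
  have hxy : ∀ m : ℕ, (l - (k + 1) + 1 - d : ℝ) ≠ -m := by
    have hd' (n : ℤ) : -d ≠ n := fun h => hd (-n) (by push_cast; linarith)
    simpa [← sub_eq_add_neg] using intCast_add_ne_neg_natCast hd' (l - (k + 1) + 1)
  have h_vand := Gamma_add_add_nat_mul_Gamma (x := 1 - 2 * d) hy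
    (fun m => by convert hxy m using 1; ring) k
  rw [show 1 - 2 * d + (l - (k + 1) + d) + k = (l - d : ℝ) by ring,
    show 1 - 2 * d + (l - (k + 1) + d) = (l - (k + 1) + 1 - d : ℝ) by ring] at h_vand
  rw [sum_congr rfl fun i hi => by
    rw [Nat.cast_sub (Nat.lt_succ_iff.mp (mem_range.mp hi)),
      show (l - (k + 1) + d + (k - i) : ℝ) = l + (d - 1 - i) by ring]] at h_vand
  rw [eq_comm, mul_comm, ← eq_div_iff (Gamma_ne_zero hxy)] at h_vand
  simp only [arCoeff, acvfShape, mul_div_assoc', ← sum_div, h_vand]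
  push_cast
  ring

theorem summable_abs_and_hasSum_arCoeff_mul_acvfShape (h0 : 0 < d) (h1 : d < 1) (k : ℕ) :
    Summable (fun l : ℕ => |arCoeff d l * acvfShape d (l - (k + 1 : ℕ))|) ∧
      HasSum (fun l : ℕ => arCoeff d l * acvfShape d (l - (k + 1 : ℕ))) 0 := by
  have hd := ne_intCast_of_pos_of_lt_one h0 h1
  refine summable_abs_and_hasSum_of_tendsto_of_succ_nonpos
    (fun l => (mul_neg_of_neg_of_pos (arCoeff_succ_neg h0 h1 l) (acvfShape_pos h0 h1 _)).le) ?_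
  have h_binom (i : ℕ) :
      Tendsto (fun n => ∑ l ∈ range n, Gamma (l + (d - 1 - i)) / Gamma (l + 1)) atTop
        (𝓝 0) := by
    refine tendsto_sum_range_Gamma_add_div_Gamma_add_one (fun m => ?_) (by linarith)
    convert intCast_add_ne_neg_natCast hd (-1 - i) m using 1
    push_cast; ring
  have h_lim := (tendsto_finsetSum (range (k + 1)) fun i _ => (h_binom i).const_mul
    ((k.choose i : ℝ) * (ascPochhammer ℝ i).eval (1 - 2 * d))).const_mul (Gamma (-d))⁻¹
  simp only [mul_zero, sum_const_zero] at h_lim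
  refine h_lim.congr fun n => ?_
  simp_rw [arCoeff_mul_acvfShape_eq_sum hd, mul_sum]
  rw [sum_comm]

end FracNoise

theorem stmt_10_general (d σε2 : ℝ) (hd0 : 0 < d) (hd2 : d < 1 / 2)
    (a : ℕ → ℝ) (σ : ℤ → ℝ) (ha0 : a 0 = 1)
    (ha : ∀ l : ℕ, 1 ≤ l →
      a l = Real.Gamma ((l : ℝ) - d) / (Real.Gamma ((l : ℝ) + 1) * Real.Gamma (-d)))
    (hσ : ∀ m : ℤ, σ m = σε2 * Real.Gamma (1 - 2 * d) * Real.Gamma ((|m| : ℤ) + d) /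
      (Real.Gamma d * Real.Gamma (1 - d) * Real.Gamma ((|m| : ℤ) + 1 - d))) :
    ∀ j : ℕ, 1 ≤ j →
      (Summable fun l : ℕ => |a l * σ ((l : ℤ) - j)|) ∧
      ∑' l : ℕ, a l * σ ((l : ℤ) - j) = 0 := by
  intro j hj
  obtain ⟨k, rfl⟩ := Nat.exists_eq_add_of_le' hj
  have hd1 : d < 1 := by linarith
  have ha' : a = FracNoise.arCoeff d := funext fun l => by
    rcases l with _ | l
    · rw [ha0, FracNoise.arCoeff_zero (Gamma_neg_of_pos_of_lt_one hd0 hd1).ne]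
    · exact ha _ l.succ_pos
  set C := σε2 * Gamma (1 - 2 * d) / (Gamma d * Gamma (1 - d))
  have hσ' (m : ℤ) : σ m = C * FracNoise.acvfShape d m := by
    rw [hσ, ← FracNoise.acvfShape_abs (ne_intCast_of_pos_of_lt_one hd0 hd1),
      FracNoise.acvfShape]
    ring
  obtain ⟨h_abs, h_sum⟩ := FracNoise.summable_abs_and_hasSum_arCoeff_mul_acvfShape hd0 hd1 k
  simp only [ha', hσ', mul_left_comm _ C, abs_mul C]
  exact ⟨h_abs.mul_left |C|, by rw [tsum_mul_left, h_sum.tsum_eq, mul_zero]⟩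

/-- For F(d) with `0 < d < 1/2`, `σε² > 0`, AR coefficients `a 0 = 1`,
`a l = Γ(l-d)/(Γ(l+1)Γ(-d))` for `l ≥ 1`, and autocovariance
`σ m = σε² Γ(1-2d) Γ(|m|+d)/(Γ(d)Γ(1-d)Γ(|m|+1-d))`, for every `j ≥ 1` the series
`∑_{l=0}^∞ a l σ (l - j)` converges absolutely and equals `0`. -/
theorem stmt_10 (d σε2 : ℝ) (hd0 : 0 < d) (hd2 : d < 1 / 2) (hσε2 : 0 < σε2)
    (a : ℕ → ℝ) (σ : ℤ → ℝ) (ha0 : a 0 = 1)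
    (ha : ∀ l : ℕ, 1 ≤ l →
      a l = Real.Gamma ((l : ℝ) - d) / (Real.Gamma ((l : ℝ) + 1) * Real.Gamma (-d)))
    (hσ : ∀ m : ℤ, σ m = σε2 * Real.Gamma (1 - 2 * d) * Real.Gamma ((|m| : ℤ) + d) /
      (Real.Gamma d * Real.Gamma (1 - d) * Real.Gamma ((|m| : ℤ) + 1 - d))) :
    ∀ j : ℕ, 1 ≤ j →
      (Summable fun l : ℕ => |a l * σ ((l : ℤ) - j)|) ∧
      ∑' l : ℕ, a l * σ ((l : ℤ) - j) = 0 :=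
  stmt_10_general d σε2 hd0 hd2 a σ ha0 ha hσ
end

section
/- For 0 < d < 1/2, let a_j = Γ(j−d)/(Γ(j+1)Γ(−d)) for j ≥ 1, and for integers 1 ≤ j ≤ k define the k-th order Yule–Walker coefficient a_{j,k} = Γ(k+1) Γ(j−d) Γ(k−d−j+1) / (Γ(k−j+1) Γ(j+1) Γ(−d) Γ(k−d+1)). Then a_j − a_{j,k} = −a_j · ( ∏_{m=0}^{j−1} (k−m)/(k−d−m) − 1 ), and consequently a_j − a_{j,k} > 0 for all 1 ≤ j ≤ k. -/
open Real Finset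

/-!
Iterating `Γ(s + 1) = s Γ(s)` turns the Gamma quotient `Γ(k+1)Γ(k-d-j+1) / (Γ(k-j+1)Γ(k-d+1))`
into `∏_{m<j} (k-m)/(k-d-m)`, so `a_{j,k} = a_j ∏_{m<j} (k-m)/(k-d-m)`. Each factor exceeds `1`
since `d > 0`, while `a_j < 0` because `Γ(-d) < 0` for `-1 < -d < 0`.
-/

namespace Real

theorem Gamma_add_one_eq_prod_mul_Gamma (x : ℝ) (j : ℕ) (hx : ∀ m < j, x - m ≠ 0) :
    Gamma (x + 1) = (∏ m ∈ range j, (x - m)) * Gamma (x - j + 1) := by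
  induction j with
  | zero => simp
  | succ j ih =>
    have hshift : x - ↑(j + 1) + 1 = x - j := by push_cast; ring
    have hstep : Gamma (x - j + 1) = (x - j) * Gamma (x - ↑(j + 1) + 1) := by
      rw [← hshift, ← Gamma_add_one (hshift ▸ hx j j.lt_succ_self), hshift]
    rw [ih fun m hm => hx m (Nat.lt_succ_of_lt hm), hstep, prod_range_succ, mul_assoc]

theorem Gamma_neg_of_neg_one_lt_of_neg {s : ℝ} (h1 : -1 < s) (h0 : s < 0) : Gamma s < 0 := by
  have hpos : 0 < s * Gamma s := Gamma_add_one h0.ne ▸ Gamma_pos_of_pos (by linarith)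
  exact neg_of_mul_pos_right hpos h0.le

theorem Gamma_quotient_eq_prod_div {x d : ℝ} {j : ℕ} (hx : 0 < x - j + 1)
    (hxd : 0 < x - d - j + 1) :
    Gamma (x + 1) * Gamma (x - d - j + 1) / (Gamma (x - j + 1) * Gamma (x - d + 1)) =
      ∏ m ∈ range j, (x - m) / (x - d - m) := by
  have hfactor {y : ℝ} (hy : 0 < y - j + 1) : ∀ m < j, y - m ≠ 0 := fun m hm => by
    have : (m : ℝ) + 1 ≤ j := by exact_mod_cast hm
    linarith
  have hnum := Gamma_add_one_eq_prod_mul_Gamma x j (hfactor hx)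
  have hden := Gamma_add_one_eq_prod_mul_Gamma (x - d) j (hfactor (by linarith))
  rw [prod_div_distrib, hnum, hden]
  field_simp [(Gamma_pos_of_pos hx).ne', (Gamma_pos_of_pos hxd).ne']

end Real

theorem one_lt_prod_sub_div_sub_sub {x d : ℝ} {j : ℕ} (hj : j ≠ 0) (hd : 0 < d)
    (hxd : 0 < x - d - j + 1) :
    1 < ∏ m ∈ range j, (x - m) / (x - d - m) := by
  have hfactor : ∀ m ∈ range j, 1 < (x - m) / (x - d - m) := fun m hm => by
    have : (m : ℝ) + 1 ≤ j := by exact_mod_cast mem_range.mp hm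
    rw [one_lt_div (by linarith)]
    linarith
  simpa using prod_lt_prod_of_nonempty (fun _ _ => one_pos) hfactor (nonempty_range_iff.mpr hj)

/-- For `0 < d < 1/2`, with `a j = Γ(j-d)/(Γ(j+1)Γ(-d))` and the k-th order
Yule–Walker coefficients `a_{j,k} = Γ(k+1)Γ(j-d)Γ(k-d-j+1)/(Γ(k-j+1)Γ(j+1)Γ(-d)Γ(k-d+1))`,
for `1 ≤ j ≤ k` we have
`a j - a_{j,k} = -a j * (∏_{m=0}^{j-1} (k-m)/(k-d-m) - 1)`, hence `a j - a_{j,k} > 0`. -/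
theorem stmt_11 (d : ℝ) (hd0 : 0 < d) (hd2 : d < 1 / 2)
    (a : ℕ → ℝ) (ak : ℕ → ℕ → ℝ)
    (ha : ∀ j : ℕ, 1 ≤ j →
      a j = Real.Gamma ((j : ℝ) - d) / (Real.Gamma ((j : ℝ) + 1) * Real.Gamma (-d)))
    (hak : ∀ k j : ℕ, 1 ≤ j → j ≤ k →
      ak j k = Real.Gamma ((k : ℝ) + 1) * Real.Gamma ((j : ℝ) - d) *
          Real.Gamma ((k : ℝ) - d - j + 1) /
        (Real.Gamma ((k : ℝ) - j + 1) * Real.Gamma ((j : ℝ) + 1) * Real.Gamma (-d) *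
          Real.Gamma ((k : ℝ) - d + 1))) :
    ∀ k j : ℕ, 1 ≤ j → j ≤ k →
      a j - ak j k =
        -a j * (∏ m ∈ Finset.range j, ((k : ℝ) - m) / ((k : ℝ) - d - m) - 1) ∧
      0 < a j - ak j k := by
  intro k j hj hjk
  have hjk' : (j : ℝ) ≤ k := by exact_mod_cast hjk
  have hj' : (1 : ℝ) ≤ j := by exact_mod_cast hj
  have hkd : 0 < (k : ℝ) - d - j + 1 := by linarith
  have hak_eq : ak j k = a j * ∏ m ∈ range j, ((k : ℝ) - m) / ((k : ℝ) - d - m) := by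
    rw [hak k j hj hjk, ha j hj, ← Gamma_quotient_eq_prod_div (by linarith) hkd]
    ring
  have ha_neg : a j < 0 := by
    rw [ha j hj]
    exact div_neg_of_pos_of_neg (Gamma_pos_of_pos (by linarith)) <|
      mul_neg_of_pos_of_neg (Gamma_pos_of_pos (by linarith))
        (Gamma_neg_of_neg_one_lt_of_neg (by linarith) (by linarith))
  have hprod := one_lt_prod_sub_div_sub_sub (Nat.one_le_iff_ne_zero.mp hj) hd0 hkd
  have hdiff : a j - ak j k =
      -a j * (∏ m ∈ range j, ((k : ℝ) - m) / ((k : ℝ) - d - m) - 1) := by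
    rw [hak_eq]; ring
  exact ⟨hdiff, hdiff ▸ mul_pos (neg_pos.mpr ha_neg) (sub_pos.mpr hprod)⟩
end

section
/- Let (σ(m))_{m∈ℤ} be a real even sequence (σ(−m) = σ(m)) and (a_j)_{j≥0} a real sequence with a_0 = 1 such that Σ_{l≥0} |a_l| |σ(l−j)| < ∞ for all j and the double series below converge absolutely. Fix k ≥ 1 and let (a_{j,k})_{0≤j≤k} be reals with a_{0,k} = 1 satisfying the Yule–Walker equations Σ_{i=1}^k a_{i,k} σ(i−j) = σ(j) for all 1 ≤ j ≤ k (here a_{j,k} enters the error formula with the AR sign convention, and we set a_{j,k} = 0 for j > k); assume moreover Σ_{l=0}^∞ a_l σ(l−j) = 0 for every j ≥ 1. Then Σ_{j=0}^∞ Σ_{l=0}^∞ (a_j a_l − a_{j,k} a_{l,k}) σ(j−l) = Σ_{j=1}^k Σ_{l=1}^k (a_{j,k} − a_j)(a_l − a_{l,k}) σ(j−l) + 2 Σ_{j=1}^k (a_{j,k} − a_j) Σ_{l=k+1}^∞ a_l σ(j−l) − Σ_{j=k+1}^∞ Σ_{l=k+1}^∞ a_j a_l σ(j−l). -/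
open Finset

/-!
Write `B(x, y) = ∑_{j,l} x_j y_l σ(j - l)` and `c = a - ak`. Formally the identity reads
`B(a, a) - B(ak, ak) = -B(c, c)`, which by the symmetry of `B` is `2 B(c, a) = 0`; and
`B(c, a) = 0` because `c₀ = 0` while `∑_l a_l σ(j - l) = 0` for `j ≥ 1`. To make this rigorous
without rearranging double series, each of the two double series is evaluated row by row through
these orthogonality relations; what remains are finite sums over `0 ≤ j, l ≤ k` and the constant
`∑_l a_l σ(-l)`, where the identity is bilinear algebra.
-/

theorem Function.Even.apply_sub_comm {σ : ℤ → ℝ} (hσ : σ.Even) (x y : ℤ) :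
    σ (x - y) = σ (y - x) := by
  rw [← hσ, neg_sub]

theorem Summable.tsum_nat_add_eq_sub {G : Type*} [AddCommGroup G] [TopologicalSpace G]
    [IsTopologicalAddGroup G] [T2Space G] {f : ℕ → G} (hf : Summable f) (n : ℕ) :
    ∑' m, f (n + m) = ∑' m, f m - ∑ m ∈ range n, f m := by
  rw [← hf.sum_add_tsum_nat_add n]
  simp only [add_comm n, add_sub_cancel_left]

theorem Finset.sum_Icc_one_eq_sum_range_succ {M : Type*} [AddCommMonoid M] {f : ℕ → M}
    (hf : f 0 = 0) (k : ℕ) : ∑ i ∈ Icc 1 k, f i = ∑ i ∈ range (k + 1), f i := by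
  rw [range_eq_Ico, sum_eq_sum_Ico_succ_bot (Nat.succ_pos k), hf, zero_add]
  rfl

def toeplitzForm (σ : ℤ → ℝ) (s : Finset ℕ) (x y : ℕ → ℝ) : ℝ :=
  ∑ j ∈ s, ∑ l ∈ s, x j * y l * σ (j - l)

section toeplitzForm

variable {σ : ℤ → ℝ} {s : Finset ℕ} {x x' y y' : ℕ → ℝ}

theorem toeplitzForm_comm (hσ : σ.Even) : toeplitzForm σ s x y = toeplitzForm σ s y x := by
  rw [toeplitzForm, sum_comm]
  refine sum_congr rfl fun j _ => sum_congr rfl fun l _ => ?_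
  rw [hσ.apply_sub_comm]
  ring

theorem toeplitzForm_sub_left :
    toeplitzForm σ s (x - x') y = toeplitzForm σ s x y - toeplitzForm σ s x' y := by
  simp only [toeplitzForm, ← sum_sub_distrib, Pi.sub_apply, sub_mul]

theorem toeplitzForm_sub_right :
    toeplitzForm σ s x (y - y') = toeplitzForm σ s x y - toeplitzForm σ s x y' := by
  simp only [toeplitzForm, ← sum_sub_distrib, Pi.sub_apply, mul_sub, sub_mul]

end toeplitzForm

section Orthogonality

variable {σ : ℤ → ℝ} {a : ℕ → ℝ}

theorem summable_mul_apply_sub (hσ : σ.Even)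
    (hsum : ∀ j : ℤ, Summable fun l : ℕ => |a l| * |σ (l - j)|) (i : ℤ) :
    Summable fun l : ℕ => a l * σ (i - l) :=
  summable_abs_iff.mp <| (hsum i).congr fun l => by rw [abs_mul, hσ.apply_sub_comm]

theorem sum_mul_tsum_eq_tsum_of_orthogonal (ha0 : a 0 = 1)
    (horth : ∀ j : ℕ, j ≠ 0 → ∑' l, a l * σ (j - l) = 0) (n : ℕ) :
    ∑ j ∈ range (n + 1), a j * ∑' l, a l * σ (j - l) = ∑' l, a l * σ (-l) := by
  rw [sum_eq_single_of_mem 0 (by simp) fun j _ hj => by rw [horth j hj, mul_zero]]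
  simp [ha0]

theorem tsum_tsum_mul_sub_mul_eq {b : ℕ → ℝ} {n : ℕ}
    (ha : ∀ i : ℤ, Summable fun l : ℕ => a l * σ (i - l)) (ha0 : a 0 = 1)
    (horth : ∀ j : ℕ, j ≠ 0 → ∑' l, a l * σ (j - l) = 0) (hb : ∀ j, n < j → b j = 0) :
    ∑' j : ℕ, ∑' l : ℕ, (a j * a l - b j * b l) * σ (j - l)
      = ∑' l, a l * σ (-l) - toeplitzForm σ (range (n + 1)) b b := by
  have hb' : ∀ j ∉ range (n + 1), b j = 0 := fun j hj => hb j (by simpa using hj)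
  have hrow : ∀ j : ℕ, ∑' l : ℕ, (a j * a l - b j * b l) * σ (j - l)
      = a j * ∑' l, a l * σ (j - l) - ∑ l ∈ range (n + 1), b j * b l * σ (j - l) := by
    intro j
    have hzero : ∀ l ∉ range (n + 1), b j * b l * σ (j - l) = 0 := fun l hl => by
      rw [hb' l hl, mul_zero, zero_mul]
    simp_rw [sub_mul, mul_assoc (a j)]
    rw [Summable.tsum_sub ((ha j).mul_left (a j)) (summable_of_ne_finset_zero hzero),
      tsum_mul_left, tsum_eq_sum hzero]
  rw [tsum_congr hrow, tsum_eq_sum (s := range (n + 1)) fun j hj => by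
      simp [hb' j hj, horth j (by rintro rfl; simp at hj)],
    sum_sub_distrib, sum_mul_tsum_eq_tsum_of_orthogonal ha0 horth]
  rfl

theorem tsum_nat_add_mul_eq_neg_sum (ha : ∀ i : ℤ, Summable fun l : ℕ => a l * σ (i - l))
    (horth : ∀ j : ℕ, j ≠ 0 → ∑' l, a l * σ (j - l) = 0) (n : ℕ) {j : ℕ} (hj : j ≠ 0) :
    ∑' m, a (n + m) * σ (j - ↑(n + m)) = -∑ l ∈ range n, a l * σ (j - l) := by
  rw [(ha j).tsum_nat_add_eq_sub n, horth j hj, zero_sub]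

theorem tsum_tsum_tail_eq (hσ : σ.Even) (ha : ∀ i : ℤ, Summable fun l : ℕ => a l * σ (i - l))
    (ha0 : a 0 = 1) (horth : ∀ j : ℕ, j ≠ 0 → ∑' l, a l * σ (j - l) = 0) (n : ℕ) :
    ∑' j : ℕ, ∑' l : ℕ, a (n + 1 + j) * a (n + 1 + l) * σ (j - l)
      = toeplitzForm σ (range (n + 1)) a a - ∑' l, a l * σ (-l) := by
  have htail : ∀ i : ℤ, ∑' m, a (n + 1 + m) * σ (i - ↑(n + 1 + m))
      = ∑' l, a l * σ (i - l) - ∑ l ∈ range (n + 1), a l * σ (i - l) :=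
    fun i => (ha i).tsum_nat_add_eq_sub (n + 1)
  have hrow : ∀ j : ℕ, ∑' l : ℕ, a (n + 1 + j) * a (n + 1 + l) * σ (j - l)
      = -∑ l ∈ range (n + 1), a l * (a (n + 1 + j) * σ (l - ↑(n + 1 + j))) := by
    intro j
    have hshift : ∀ l : ℕ, σ (j - l) = σ (↑(n + 1 + j) - ↑(n + 1 + l)) := fun l => by
      push_cast
      ring_nf
    simp_rw [hshift, mul_assoc, tsum_mul_left,
      tsum_nat_add_mul_eq_neg_sum ha horth (n + 1) (by omega : n + 1 + j ≠ 0), mul_neg, mul_sum]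
    refine congrArg _ (sum_congr rfl fun l _ => ?_)
    rw [hσ.apply_sub_comm]
    ring
  have hsumm : ∀ l : ℕ, Summable fun j : ℕ => a (n + 1 + j) * σ (l - ↑(n + 1 + j)) := fun l =>
    ((summable_nat_add_iff (n + 1)).mpr (ha l)).congr fun j => by rw [add_comm j]
  rw [tsum_congr hrow, tsum_neg, Summable.tsum_finsetSum fun l _ => (hsumm l).mul_left (a l)]
  simp_rw [tsum_mul_left, htail, mul_sub, sum_sub_distrib,
    sum_mul_tsum_eq_tsum_of_orthogonal ha0 horth]
  simp only [toeplitzForm, mul_sum, mul_assoc]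
  ring

end Orthogonality

theorem stmt_13_general (σ : ℤ → ℝ) (a ak : ℕ → ℝ) (k : ℕ)
    (hσeven : ∀ m : ℤ, σ (-m) = σ m)
    (ha0 : a 0 = 1) (hak0 : ak 0 = 1) (hakzero : ∀ j : ℕ, k < j → ak j = 0)
    (hsum : ∀ j : ℤ, Summable fun l : ℕ => |a l| * |σ ((l : ℤ) - j)|)
    (horth : ∀ j : ℕ, 1 ≤ j → ∑' l : ℕ, a l * σ ((l : ℤ) - j) = 0) :
    ∑' j : ℕ, ∑' l : ℕ, (a j * a l - ak j * ak l) * σ ((j : ℤ) - l)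
      = (∑ j ∈ Finset.Icc 1 k, ∑ l ∈ Finset.Icc 1 k,
          (ak j - a j) * (a l - ak l) * σ ((j : ℤ) - l))
        + 2 * ∑ j ∈ Finset.Icc 1 k, (ak j - a j) *
            ∑' l : ℕ, a (k + 1 + l) * σ ((j : ℤ) - (k + 1 + l))
        - ∑' j : ℕ, ∑' l : ℕ,
            a (k + 1 + j) * a (k + 1 + l) * σ ((j : ℤ) - l) := by
  have hσ : σ.Even := hσeven
  have ha := summable_mul_apply_sub hσ hsum
  have horth' : ∀ j : ℕ, j ≠ 0 → ∑' l, a l * σ (j - l) = 0 := fun j hj => by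
    simpa only [hσ.apply_sub_comm] using horth j (Nat.one_le_iff_ne_zero.mpr hj)
  have hdiff0 : ak 0 - a 0 = 0 := by rw [ha0, hak0, sub_self]
  have hR1 : ∑ j ∈ Icc 1 k, ∑ l ∈ Icc 1 k, (ak j - a j) * (a l - ak l) * σ (j - l)
      = toeplitzForm σ (range (k + 1)) (ak - a) (a - ak) := by
    rw [sum_Icc_one_eq_sum_range_succ (by simp [hdiff0])]
    refine sum_congr rfl fun j _ => sum_Icc_one_eq_sum_range_succ (by simp [ha0, hak0]) k
  have hR2 : ∑ j ∈ Icc 1 k, (ak j - a j) * ∑' l : ℕ, a (k + 1 + l) * σ (j - (k + 1 + l))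
      = -toeplitzForm σ (range (k + 1)) (ak - a) a := by
    have htail : ∀ j ∈ Icc 1 k, ∑' l : ℕ, a (k + 1 + l) * σ (j - (k + 1 + l))
        = -∑ l ∈ range (k + 1), a l * σ (j - l) := fun j hj => by
      simpa only [Nat.cast_add, Nat.cast_one] using tsum_nat_add_mul_eq_neg_sum ha horth' (k + 1)
        (Nat.one_le_iff_ne_zero.mp (mem_Icc.mp hj).1)
    rw [sum_congr rfl fun j hj => by rw [htail j hj],
      sum_Icc_one_eq_sum_range_succ (by simp [hdiff0])]
    simp only [toeplitzForm, mul_neg, mul_sum, sum_neg_distrib, Pi.sub_apply, mul_assoc]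
  rw [tsum_tsum_mul_sub_mul_eq ha ha0 horth' hakzero, tsum_tsum_tail_eq hσ ha ha0 horth' k, hR1,
    hR2, toeplitzForm_sub_left, toeplitzForm_sub_right, toeplitzForm_sub_right,
    toeplitzForm_sub_left]
  linear_combination toeplitzForm_comm (s := range (k + 1)) (x := ak) (y := a) hσ

/-- Error-decomposition identity. If `σ` is even, `a 0 = 1`,
`∑_l |a l||σ(l-j)| < ∞` for all `j`, the double series involved converge absolutely,
`(a_{j,k})` satisfies `a_{0,k} = 1`, `a_{j,k} = 0` for `j > k`, the Yule–Walker equations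
`∑_{i=1}^k a_{i,k} σ(i-j) = σ(j)` for `1 ≤ j ≤ k`, and the orthogonality relations
`∑_{l=0}^∞ a_l σ(l-j) = 0` for `j ≥ 1`, then
`∑_{j,l≥0} (a_j a_l - a_{j,k} a_{l,k}) σ(j-l)
  = ∑_{j,l=1}^k (a_{j,k}-a_j)(a_l-a_{l,k}) σ(j-l)
    + 2 ∑_{j=1}^k (a_{j,k}-a_j) ∑_{l>k} a_l σ(j-l)
    - ∑_{j,l>k} a_j a_l σ(j-l)`. -/
theorem stmt_13 (σ : ℤ → ℝ) (a ak : ℕ → ℝ) (k : ℕ) (hk : 1 ≤ k)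
    (hσeven : ∀ m : ℤ, σ (-m) = σ m)
    (ha0 : a 0 = 1) (hak0 : ak 0 = 1) (hakzero : ∀ j : ℕ, k < j → ak j = 0)
    (hsum : ∀ j : ℤ, Summable fun l : ℕ => |a l| * |σ ((l : ℤ) - j)|)
    (hsumLHS : Summable fun p : ℕ × ℕ =>
      |(a p.1 * a p.2 - ak p.1 * ak p.2) * σ ((p.1 : ℤ) - p.2)|)
    (hsumTail : Summable fun p : ℕ × ℕ =>
      |a (k + 1 + p.1) * a (k + 1 + p.2) * σ ((p.1 : ℤ) - p.2)|)
    (hYW : ∀ j : ℕ, 1 ≤ j → j ≤ k →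
      ∑ i ∈ Finset.Icc 1 k, ak i * σ ((i : ℤ) - j) = σ j)
    (horth : ∀ j : ℕ, 1 ≤ j → ∑' l : ℕ, a l * σ ((l : ℤ) - j) = 0) :
    ∑' j : ℕ, ∑' l : ℕ, (a j * a l - ak j * ak l) * σ ((j : ℤ) - l)
      = (∑ j ∈ Finset.Icc 1 k, ∑ l ∈ Finset.Icc 1 k,
          (ak j - a j) * (a l - ak l) * σ ((j : ℤ) - l))
        + 2 * ∑ j ∈ Finset.Icc 1 k, (ak j - a j) *
            ∑' l : ℕ, a (k + 1 + l) * σ ((j : ℤ) - (k + 1 + l))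
        - ∑' j : ℕ, ∑' l : ℕ,
            a (k + 1 + j) * a (k + 1 + l) * σ ((j : ℤ) - l) :=
  stmt_13_general σ a ak k hσeven ha0 hak0 hakzero hsum horth
end

section
/- Let 0 < d < 1/2 and let (a_j)_{j≥1}, (b_j)_{j≥0} be real sequences such that for every δ > 0 there are constants C₁(δ), C₂(δ) with |a_j| ≤ C₁(δ) j^{−d−1+δ} for j ≥ 1 and |b_j| ≤ C₂(δ) j^{d−1+δ} for j ≥ 1, with b_0 bounded. Then for every δ > 0 there is a constant C(δ) such that for all integers h ≥ 1 and j ≥ 1: |Σ_{m=0}^{h−1} a_{j+h−1−m} b_m| ≤ C(δ) h^{d+2δ} j^{−d−1+δ}. -/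
/-!
Every index `j + h - 1 - m` with `m < h` is at least `j`, so each `a`-factor is at most
`C₁ j^(-d-1+δ')`, while the partial sums of `|b m|` grow like `h^(d+δ')`: by concavity of
`x ↦ x^s` for `s = d + δ' ≤ 1`, `s (m+1)^(s-1) ≤ (m+1)^s - m^s`, and the right side telescopes.
-/

open Real Finset

theorem mul_add_one_rpow_sub_one_le_sub {s x : ℝ} (hs0 : 0 ≤ s) (hs1 : s ≤ 1) (hx : 0 ≤ x) :
    s * (x + 1) ^ (s - 1) ≤ (x + 1) ^ s - x ^ s := by
  have hx1 : 0 < x + 1 := by linarith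
  have hbernoulli := rpow_one_add_le_one_add_mul_self
    (show -1 ≤ -(x + 1)⁻¹ from neg_le_neg (inv_le_one_of_one_le₀ (by linarith))) hs0 hs1
  have hratio : 1 + -(x + 1)⁻¹ = x / (x + 1) := by field_simp; ring
  rw [hratio, div_rpow hx hx1.le, div_le_iff₀ (rpow_pos_of_pos hx1 s)] at hbernoulli
  have hexpand : (1 + s * -(x + 1)⁻¹) * (x + 1) ^ s = (x + 1) ^ s - s * (x + 1) ^ (s - 1) := by
    rw [rpow_sub_one hx1.ne']; field_simp; ring
  linarith

theorem sum_range_add_one_rpow_sub_one_le {s : ℝ} (hs0 : 0 < s) (hs1 : s ≤ 1) (n : ℕ) :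
    ∑ m ∈ range n, ((m : ℝ) + 1) ^ (s - 1) ≤ (n : ℝ) ^ s / s := by
  rw [le_div_iff₀ hs0, sum_mul]
  calc ∑ m ∈ range n, ((m : ℝ) + 1) ^ (s - 1) * s
      ≤ ∑ m ∈ range n, (((m + 1 : ℕ) : ℝ) ^ s - (m : ℝ) ^ s) :=
        sum_le_sum fun m _ => by
          push_cast
          linarith [mul_add_one_rpow_sub_one_le_sub hs0.le hs1 m.cast_nonneg]
    _ = (n : ℝ) ^ s := by
        rw [sum_range_sub (fun m : ℕ => (m : ℝ) ^ s)]
        simp [zero_rpow hs0.ne']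

theorem nonneg_of_forall_abs_le_mul_rpow {u : ℕ → ℝ} {C p : ℝ}
    (hu : ∀ j : ℕ, 1 ≤ j → |u j| ≤ C * (j : ℝ) ^ p) : 0 ≤ C := by
  simpa using (abs_nonneg _).trans (hu 1 le_rfl)

theorem abs_le_mul_rpow_of_le {u : ℕ → ℝ} {C p : ℝ} (hp : p ≤ 0)
    (hu : ∀ j : ℕ, 1 ≤ j → |u j| ≤ C * (j : ℝ) ^ p) {i j : ℕ} (hj : 1 ≤ j) (hij : j ≤ i) :
    |u i| ≤ C * (j : ℝ) ^ p := by
  have hC := nonneg_of_forall_abs_le_mul_rpow hu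
  refine (hu i (hj.trans hij)).trans (mul_le_mul_of_nonneg_left ?_ hC)
  exact rpow_le_rpow_of_nonpos (Nat.cast_pos.mpr hj) (Nat.cast_le.mpr hij) hp

theorem sum_range_abs_le_mul_rpow {u : ℕ → ℝ} {C s : ℝ} (hs0 : 0 < s) (hs1 : s ≤ 1)
    (hu : ∀ j : ℕ, 1 ≤ j → |u j| ≤ C * (j : ℝ) ^ (s - 1)) {n : ℕ} (hn : 1 ≤ n) :
    ∑ m ∈ range n, |u m| ≤ (|u 0| + C / s) * (n : ℝ) ^ s := by
  have hC := nonneg_of_forall_abs_le_mul_rpow hu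
  obtain ⟨k, rfl⟩ := Nat.exists_eq_add_of_le' hn
  have hn1 : (1 : ℝ) ≤ ((k + 1 : ℕ) : ℝ) := by exact_mod_cast hn
  have htail : ∑ m ∈ range k, |u (m + 1)| ≤ C / s * ((k + 1 : ℕ) : ℝ) ^ s :=
    calc ∑ m ∈ range k, |u (m + 1)| ≤ ∑ m ∈ range k, C * ((m : ℝ) + 1) ^ (s - 1) :=
          sum_le_sum fun m _ => by exact_mod_cast hu (m + 1) (Nat.le_add_left 1 m)
      _ ≤ C * ((k : ℝ) ^ s / s) := by
          rw [← mul_sum]; gcongr; exact sum_range_add_one_rpow_sub_one_le hs0 hs1 k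
      _ ≤ C / s * ((k + 1 : ℕ) : ℝ) ^ s := by
          rw [mul_div_assoc', div_mul_eq_mul_div]; gcongr; omega
  have hhead : |u 0| ≤ |u 0| * ((k + 1 : ℕ) : ℝ) ^ s :=
    le_mul_of_one_le_right (abs_nonneg _) (one_le_rpow hn1 hs0.le)
  rw [sum_range_succ', add_mul]
  linarith

theorem abs_sum_range_mul_le {a b : ℕ → ℝ} {A : ℝ} {h j : ℕ} (ha : ∀ i, j ≤ i → |a i| ≤ A) :
    |∑ m ∈ range h, a (j + h - 1 - m) * b m| ≤ A * ∑ m ∈ range h, |b m| := by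
  rw [mul_sum]
  refine (abs_sum_le_sum_abs _ _).trans (sum_le_sum fun m hm => ?_)
  rw [abs_mul]
  exact mul_le_mul_of_nonneg_right (ha _ (by have := mem_range.mp hm; omega)) (abs_nonneg _)

/-- For `0 < d < 1/2`, if for every `δ > 0` we have `|a j| ≤ C₁ j^(-d-1+δ)`
and `|b j| ≤ C₂ j^(d-1+δ)` for `j ≥ 1`, then for every `δ > 0` there is `C` such that
for all `h ≥ 1` and `j ≥ 1`:
`|∑_{m=0}^{h-1} a_{j+h-1-m} b_m| ≤ C h^(d+2δ) j^(-d-1+δ)`. -/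
theorem stmt_18 (d : ℝ) (hd0 : 0 < d) (hd2 : d < 1 / 2) (a : ℕ → ℝ) (b : ℕ → ℝ)
    (ha : ∀ δ > (0 : ℝ), ∃ C₁ : ℝ, ∀ j : ℕ, 1 ≤ j → |a j| ≤ C₁ * (j : ℝ) ^ (-d - 1 + δ))
    (hb : ∀ δ > (0 : ℝ), ∃ C₂ : ℝ, ∀ j : ℕ, 1 ≤ j → |b j| ≤ C₂ * (j : ℝ) ^ (d - 1 + δ)) :
    ∀ δ > (0 : ℝ), ∃ C : ℝ, ∀ h : ℕ, 1 ≤ h → ∀ j : ℕ, 1 ≤ j →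
      |∑ m ∈ Finset.range h, a (j + h - 1 - m) * b m|
        ≤ C * (h : ℝ) ^ (d + 2 * δ) * (j : ℝ) ^ (-d - 1 + δ) := by
  intro δ hδ
  -- Shrinking δ keeps the exponent `d + δ'` of the partial sums of `|b|` in `(0, 1]`.
  set δ' := min δ (1 / 2)
  have hδ' : 0 < δ' := lt_min hδ one_half_pos
  have hδ'_half : δ' ≤ 1 / 2 := min_le_right δ (1 / 2)
  have hδ'_le : δ' ≤ δ := min_le_left δ (1 / 2)
  obtain ⟨C₁, hC₁⟩ := ha δ' hδ'
  obtain ⟨C₂, hC₂⟩ := hb δ' hδ'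
  rw [show d - 1 + δ' = d + δ' - 1 by ring] at hC₂
  have hC₁0 := nonneg_of_forall_abs_le_mul_rpow hC₁
  have hC₂0 := nonneg_of_forall_abs_le_mul_rpow hC₂
  refine ⟨C₁ * (|b 0| + C₂ / (d + δ')), fun h hh j hj => ?_⟩
  have hA : ∀ i, j ≤ i → |a i| ≤ C₁ * (j : ℝ) ^ (-d - 1 + δ') := fun i hij =>
    abs_le_mul_rpow_of_le (by linarith) hC₁ hj hij
  have hB := sum_range_abs_le_mul_rpow (by positivity) (by linarith) hC₂ hh
  have hj1 : (1 : ℝ) ≤ j := by exact_mod_cast hj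
  have hh1 : (1 : ℝ) ≤ h := by exact_mod_cast hh
  calc |∑ m ∈ range h, a (j + h - 1 - m) * b m|
      ≤ C₁ * (j : ℝ) ^ (-d - 1 + δ') * ((|b 0| + C₂ / (d + δ')) * (h : ℝ) ^ (d + δ')) :=
        (abs_sum_range_mul_le hA).trans (mul_le_mul_of_nonneg_left hB (by positivity))
    _ ≤ C₁ * (j : ℝ) ^ (-d - 1 + δ) * ((|b 0| + C₂ / (d + δ')) * (h : ℝ) ^ (d + 2 * δ)) := by
        have hB0 : 0 ≤ |b 0| + C₂ / (d + δ') := by positivity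
        gcongr
        linarith
    _ = C₁ * (|b 0| + C₂ / (d + δ')) * (h : ℝ) ^ (d + 2 * δ) * (j : ℝ) ^ (-d - 1 + δ) := by
        ring
end

section
/- Let 0 < d < 1/2. Let (σ(m))_{m∈ℤ} be a real even sequence such that for every δ > 0 there is C₃(δ) with |σ(m)| ≤ C₃(δ) |m|^{2d−1+δ} for m ≠ 0 and σ(0) finite. Suppose that for every δ > 0 there is C(δ) such that the real coefficients c_{j,h} (j ≥ 1, h ≥ 1) satisfy |c_{j,h}| ≤ C(δ) h^{d+δ} j^{−d−1+δ}. Then for every δ > 0, Σ_{j=k+1}^∞ Σ_{l=k+1}^∞ c_{j,h} c_{l,h} σ(j−l) = O(h^{2d+δ} k^{−1+δ}) uniformly, i.e. there is a constant C′(δ) with |Σ_{j=k+1}^∞ Σ_{l=k+1}^∞ c_{j,h} c_{l,h} σ(j−l)| ≤ C′(δ) h^{2d+δ} k^{−1+δ} for all h ≥ 1 and k ≥ 1. -/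
/-!
Fix `ε > 0` with `5ε ≤ δ` and `6ε ≤ 1 - 2d`. Inserting the power-law bounds, a term with
`J = k + 1 + j ≥ L = k + 1 + l` is at most `h ^ (2d + 2ε)` times
`J ^ (-d - 1 + ε) L ^ (-d - 1 + ε) ⟨j - l⟩ ^ (2d - 1 + ε)`, and since both `L` and the lag
`⟨j - l⟩ = max 1 |j - l|` are at most `J`, this is
`≤ k ^ (-(1 - 5ε)) L ^ (-1 - ε) ⟨j - l⟩ ^ (-1 - ε)`.
The double sum of the kernel `(J ^ (-1 - ε) + L ^ (-1 - ε)) ⟨j - l⟩ ^ (-1 - ε)` is bounded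
independently of `k` by a Schur test: both `∑ n ^ (-1 - ε)` and `∑ ⟨m⟩ ^ (-1 - ε)` converge.
-/

open Real

namespace LongMemory

/-- `max 1 |m|` in place of `|m|` lets one weight also cover the lag `0`. -/
noncomputable def lagWeight (e : ℝ) (m : ℤ) : ℝ := (max 1 |(m : ℝ)|) ^ e

lemma lagWeight_nonneg (e : ℝ) (m : ℤ) : 0 ≤ lagWeight e m := by
  unfold lagWeight; positivity

lemma lagWeight_neg (e : ℝ) (m : ℤ) : lagWeight e (-m) = lagWeight e m := by
  simp [lagWeight]

lemma lagWeight_sub_comm (e : ℝ) (a b : ℤ) : lagWeight e (a - b) = lagWeight e (b - a) := by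
  rw [← neg_sub, lagWeight_neg]

lemma lagWeight_zero (e : ℝ) : lagWeight e 0 = 1 := by
  simp [lagWeight]

lemma lagWeight_of_ne_zero (e : ℝ) {m : ℤ} (hm : m ≠ 0) : lagWeight e m = |(m : ℝ)| ^ e := by
  rw [lagWeight, max_eq_right]
  exact_mod_cast Int.one_le_abs hm

lemma summable_lagWeight {p : ℝ} (hp : 1 < p) : Summable (lagWeight (-p)) :=
  (Real.summable_abs_int_rpow hp).congr_cofinite <|
    (Filter.eventually_cofinite_ne 0).mono fun _ hm => (lagWeight_of_ne_zero _ hm).symm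

lemma exists_abs_le_mul_lagWeight {σ : ℤ → ℝ} {e C : ℝ}
    (hσ : ∀ m : ℤ, m ≠ 0 → |σ m| ≤ C * (|m| : ℝ) ^ e) :
    ∃ B ≥ 0, ∀ m, |σ m| ≤ B * lagWeight e m := by
  refine ⟨max C |σ 0|, (abs_nonneg _).trans (le_max_right _ _), fun m => ?_⟩
  rcases eq_or_ne m 0 with rfl | hm
  · simp [lagWeight_zero]
  · rw [lagWeight_of_ne_zero e hm]
    exact (hσ m hm).trans (by gcongr; exact le_max_left _ _)

lemma rpow_neg_add_le_mul_rpow {J L M α β : ℝ} (hL : 0 < L) (hLJ : L ≤ J) (hM : 0 < M)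
    (hMJ : M ≤ J) (hα : 0 ≤ α) (hβ : 0 ≤ β) : J ^ (-(α + β)) ≤ L ^ (-α) * M ^ (-β) := by
  rw [neg_add, rpow_add (hL.trans_le hLJ)]
  exact mul_le_mul (rpow_le_rpow_of_nonpos hL hLJ (by linarith))
    (rpow_le_rpow_of_nonpos hM hMJ (by linarith)) (rpow_nonneg (hL.le.trans hLJ) _)
    (rpow_nonneg hL.le _)

lemma rpow_mul_rpow_mul_rpow_le {d ε K L J M : ℝ} (hd : 0 ≤ d) (hε : 0 ≤ ε)
    (hεd : 6 * ε ≤ 1 - 2 * d) (hK : 0 < K) (hKL : K ≤ L) (hLJ : L ≤ J) (hM : 0 < M)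
    (hMJ : M ≤ J) :
    J ^ (-d - 1 + ε) * L ^ (-d - 1 + ε) * M ^ (2 * d - 1 + ε)
      ≤ K ^ (-(1 - 5 * ε)) * L ^ (-(1 + ε)) * M ^ (-(1 + ε)) := by
  have hL : 0 < L := hK.trans_le hKL
  have hsplit : J ^ (-d - 1 + ε) ≤ L ^ (-(1 - d - 3 * ε)) * M ^ (-(2 * d + 2 * ε)) := by
    convert rpow_neg_add_le_mul_rpow (α := 1 - d - 3 * ε) (β := 2 * d + 2 * ε) hL hLJ hM hMJ
      (by linarith) (by linarith) using 2
    ring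
  have hLexp : L ^ (-(1 - d - 3 * ε)) * L ^ (-d - 1 + ε) = L ^ (-(1 - 5 * ε)) * L ^ (-(1 + ε)) := by
    rw [← rpow_add hL, ← rpow_add hL]; ring_nf
  have hMexp : M ^ (-(2 * d + 2 * ε)) * M ^ (2 * d - 1 + ε) = M ^ (-(1 + ε)) := by
    rw [← rpow_add hM]; ring_nf
  calc J ^ (-d - 1 + ε) * L ^ (-d - 1 + ε) * M ^ (2 * d - 1 + ε)
      ≤ L ^ (-(1 - d - 3 * ε)) * M ^ (-(2 * d + 2 * ε)) * L ^ (-d - 1 + ε)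
          * M ^ (2 * d - 1 + ε) := by gcongr
    _ = L ^ (-(1 - 5 * ε)) * L ^ (-(1 + ε)) * M ^ (-(1 + ε)) := by
      rw [← hLexp, ← hMexp]; ring
    _ ≤ K ^ (-(1 - 5 * ε)) * L ^ (-(1 + ε)) * M ^ (-(1 + ε)) := by
      gcongr ?_ * _ * _
      exact rpow_le_rpow_of_nonpos hK hKL (by linarith)

lemma rpow_mul_rpow_mul_lagWeight_le {d ε : ℝ} (hd : 0 ≤ d) (hε : 0 ≤ ε)
    (hεd : 6 * ε ≤ 1 - 2 * d) {k : ℕ} (hk : 1 ≤ k) (j l : ℕ) :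
    ((k + 1 + j : ℕ) : ℝ) ^ (-d - 1 + ε) * ((k + 1 + l : ℕ) : ℝ) ^ (-d - 1 + ε)
        * lagWeight (2 * d - 1 + ε) (j - l)
      ≤ (k : ℝ) ^ (-(1 - 5 * ε)) *
        ((((k + 1 + j : ℕ) : ℝ) ^ (-(1 + ε)) + ((k + 1 + l : ℕ) : ℝ) ^ (-(1 + ε)))
          * lagWeight (-(1 + ε)) (j - l)) := by
  wlog hlj : l ≤ j generalizing j l
  · have := this l j (le_of_not_ge hlj)
    rwa [lagWeight_sub_comm, lagWeight_sub_comm (-(1 + ε)), mul_comm (((k + 1 + l : ℕ) : ℝ) ^ _),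
      add_comm (((k + 1 + l : ℕ) : ℝ) ^ _)] at this
  have hk' : (1 : ℝ) ≤ k := by exact_mod_cast hk
  have hlj' : (l : ℝ) ≤ j := by exact_mod_cast hlj
  have hlag : max 1 |(((j : ℤ) - l : ℤ) : ℝ)| ≤ ((k + 1 + j : ℕ) : ℝ) := by
    push_cast
    exact max_le (by linarith [(j.cast_nonneg : (0 : ℝ) ≤ j)]) (abs_le.2 ⟨by linarith, by linarith⟩)
  have key := rpow_mul_rpow_mul_rpow_le (K := k) (L := ((k + 1 + l : ℕ) : ℝ))
    (J := ((k + 1 + j : ℕ) : ℝ)) (M := max 1 |(((j : ℤ) - l : ℤ) : ℝ)|) hd hε hεd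
    (by linarith) (by push_cast; linarith) (by push_cast; linarith)
    (lt_max_of_lt_left one_pos) hlag
  unfold lagWeight
  refine key.trans ?_
  rw [← mul_assoc, mul_add, add_mul]
  exact le_add_of_nonneg_left (by positivity)

section Schur

variable {A : ℕ → ℝ} {W : ℤ → ℝ}

lemma summable_comp_natCast_sub (hW : Summable W) (j : ℕ) : Summable fun l : ℕ => W (j - l) :=
  hW.comp_injective fun a b h => by simpa using h

lemma tsum_mul_comp_natCast_sub_le (hA0 : 0 ≤ A) (hW : Summable W) (hW0 : 0 ≤ W) (j : ℕ) :
    ∑' l : ℕ, A j * W (j - l) ≤ A j * ∑' m, W m := by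
  rw [tsum_mul_left]
  exact mul_le_mul_of_nonneg_left
    (tsum_comp_le_tsum_of_inj hW hW0 fun a b h => by simpa using h) (hA0 j)

lemma summable_mul_comp_sub (hA : Summable A) (hA0 : 0 ≤ A) (hW : Summable W) (hW0 : 0 ≤ W) :
    Summable fun p : ℕ × ℕ => A p.1 * W (p.1 - p.2) := by
  refine (summable_prod_of_nonneg fun p => mul_nonneg (hA0 _) (hW0 _)).2
    ⟨fun j => (summable_comp_natCast_sub hW j).mul_left (A j),
      (hA.mul_right (∑' m, W m)).of_nonneg_of_le
        (fun j => tsum_nonneg fun l => mul_nonneg (hA0 _) (hW0 _))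
        (tsum_mul_comp_natCast_sub_le hA0 hW hW0)⟩

lemma tsum_mul_comp_sub_le (hA : Summable A) (hA0 : 0 ≤ A) (hW : Summable W) (hW0 : 0 ≤ W) :
    ∑' p : ℕ × ℕ, A p.1 * W (p.1 - p.2) ≤ (∑' j, A j) * ∑' m, W m := by
  rw [(summable_mul_comp_sub hA hA0 hW hW0).tsum_prod, ← tsum_mul_right]
  exact Summable.tsum_le_tsum (tsum_mul_comp_natCast_sub_le hA0 hW hW0)
    (summable_mul_comp_sub hA hA0 hW hW0).prod (hA.mul_right _)

/-- A discrete Schur test for the kernel `(A j + A l) W (j - l)`. -/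
theorem abs_tsum_tsum_le_of_abs_le (hA : Summable A) (hA0 : 0 ≤ A) (hW : Summable W)
    (hW0 : 0 ≤ W) (hWeven : ∀ m, W (-m) = W m) {f : ℕ → ℕ → ℝ}
    (hf : ∀ j l, |f j l| ≤ (A j + A l) * W (j - l)) :
    |∑' j, ∑' l, f j l| ≤ 2 * (∑' j, A j) * ∑' m, W m := by
  set g : ℕ × ℕ → ℝ := fun p => A p.1 * W (p.1 - p.2)
  have hg : Summable g := summable_mul_comp_sub hA hA0 hW hW0
  have hgswap : Summable (g ∘ Prod.swap) := hg.comp_injective Prod.swap_injective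
  have hbound : ∀ p : ℕ × ℕ, ‖f p.1 p.2‖ ≤ g p + (g ∘ Prod.swap) p := fun p => by
    simpa [g, add_mul, ← hWeven (p.1 - p.2)] using hf p.1 p.2
  have hf : Summable fun p : ℕ × ℕ => f p.1 p.2 := (hg.add hgswap).of_norm_bounded hbound
  rw [← hf.tsum_prod, ← Real.norm_eq_abs]
  calc ‖∑' p : ℕ × ℕ, f p.1 p.2‖ ≤ ∑' p, g p + ∑' p : ℕ × ℕ, g p.swap :=
        tsum_of_norm_bounded (hg.hasSum.add hgswap.hasSum) hbound
    _ = 2 * ∑' p, g p := by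
      rw [show ∑' p : ℕ × ℕ, g p.swap = ∑' p, g p from (Equiv.prodComm ℕ ℕ).tsum_eq g]; ring
    _ ≤ 2 * ((∑' j, A j) * ∑' m, W m) := by gcongr; exact tsum_mul_comp_sub_le hA hA0 hW hW0
    _ = 2 * (∑' j, A j) * ∑' m, W m := by ring

end Schur

lemma summable_rpow_natCast_add {p : ℝ} (hp : 1 < p) (a : ℕ) :
    Summable fun j : ℕ => ((a + j : ℕ) : ℝ) ^ (-p) :=
  (summable_nat_rpow.2 (by linarith)).comp_injective (add_right_injective a)

lemma tsum_rpow_natCast_add_le {p : ℝ} (hp : 1 < p) (a : ℕ) :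
    ∑' j : ℕ, ((a + j : ℕ) : ℝ) ^ (-p) ≤ ∑' n : ℕ, (n : ℝ) ^ (-p) :=
  tsum_comp_le_tsum_of_inj (summable_nat_rpow.2 (by linarith)) (fun n => by positivity)
    (add_right_injective a)

lemma abs_mul_mul_le_of_decay {c : ℕ → ℝ} {σ : ℤ → ℝ} {d ε C H B : ℝ} (hd : 0 ≤ d) (hε : 0 ≤ ε)
    (hεd : 6 * ε ≤ 1 - 2 * d) (hB : 0 ≤ B)
    (hc : ∀ j : ℕ, 1 ≤ j → |c j| ≤ C * H * (j : ℝ) ^ (-d - 1 + ε))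
    (hσ : ∀ m, |σ m| ≤ B * lagWeight (2 * d - 1 + ε) m) {k : ℕ} (hk : 1 ≤ k) (j l : ℕ) :
    |c (k + 1 + j) * c (k + 1 + l) * σ (j - l)|
      ≤ (C * H) ^ 2 * B * (k : ℝ) ^ (-(1 - 5 * ε)) *
        ((((k + 1 + j : ℕ) : ℝ) ^ (-(1 + ε)) + ((k + 1 + l : ℕ) : ℝ) ^ (-(1 + ε)))
          * lagWeight (-(1 + ε)) (j - l)) := by
  have hcj := hc (k + 1 + j) (by omega)
  have hcl := hc (k + 1 + l) (by omega)
  calc |c (k + 1 + j) * c (k + 1 + l) * σ (j - l)|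
      = |c (k + 1 + j)| * |c (k + 1 + l)| * |σ (j - l)| := by rw [abs_mul, abs_mul]
    _ ≤ (C * H * ((k + 1 + j : ℕ) : ℝ) ^ (-d - 1 + ε))
          * (C * H * ((k + 1 + l : ℕ) : ℝ) ^ (-d - 1 + ε))
          * (B * lagWeight (2 * d - 1 + ε) (j - l)) := by
      have hJ := (abs_nonneg _).trans hcj
      exact mul_le_mul (mul_le_mul hcj hcl (abs_nonneg _) hJ) (hσ _) (abs_nonneg _)
        (mul_nonneg hJ ((abs_nonneg _).trans hcl))
    _ = (C * H) ^ 2 * B * (((k + 1 + j : ℕ) : ℝ) ^ (-d - 1 + ε)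
          * ((k + 1 + l : ℕ) : ℝ) ^ (-d - 1 + ε) * lagWeight (2 * d - 1 + ε) (j - l)) := by ring
    _ ≤ _ := by
      rw [mul_assoc _ ((k : ℝ) ^ _)]
      exact mul_le_mul_of_nonneg_left (rpow_mul_rpow_mul_lagWeight_le hd hε hεd hk j l)
        (mul_nonneg (sq_nonneg _) hB)

end LongMemory

open LongMemory

theorem stmt_19_general (d : ℝ) (hd0 : 0 < d) (hd2 : d < 1 / 2)
    (σ : ℤ → ℝ) (c : ℕ → ℕ → ℝ)
    (hσ : ∀ δ > (0 : ℝ), ∃ C₃ : ℝ, ∀ m : ℤ, m ≠ 0 →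
      |σ m| ≤ C₃ * (|m| : ℝ) ^ (2 * d - 1 + δ))
    (hc : ∀ δ > (0 : ℝ), ∃ C : ℝ, ∀ j : ℕ, 1 ≤ j → ∀ h : ℕ, 1 ≤ h →
      |c j h| ≤ C * (h : ℝ) ^ (d + δ) * (j : ℝ) ^ (-d - 1 + δ)) :
    ∀ δ > (0 : ℝ), ∃ C' : ℝ, ∀ h : ℕ, 1 ≤ h → ∀ k : ℕ, 1 ≤ k →
      |∑' j : ℕ, ∑' l : ℕ, c (k + 1 + j) h * c (k + 1 + l) h * σ ((j : ℤ) - l)|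
        ≤ C' * (h : ℝ) ^ (2 * d + δ) * (k : ℝ) ^ (-1 + δ) := by
  intro δ hδ
  obtain ⟨ε, hε, hεδ, hεd⟩ : ∃ ε > 0, 5 * ε ≤ δ ∧ 6 * ε ≤ 1 - 2 * d :=
    ⟨min (δ / 5) ((1 - 2 * d) / 6), lt_min (by linarith) (by linarith),
      by linarith [min_le_left (δ / 5) ((1 - 2 * d) / 6)],
      by linarith [min_le_right (δ / 5) ((1 - 2 * d) / 6)]⟩
  obtain ⟨C, hC⟩ := hc ε hε
  obtain ⟨C₃, hC₃⟩ := hσ ε hε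
  obtain ⟨B, hB0, hB⟩ := exists_abs_le_mul_lagWeight hC₃
  have hp : 1 < 1 + ε := by linarith
  set Zc := ∑' n : ℕ, (n : ℝ) ^ (-(1 + ε))
  set Zσ := ∑' m, lagWeight (-(1 + ε)) m
  have hZc : 0 ≤ Zc := tsum_nonneg fun n => by positivity
  have hZσ : 0 ≤ Zσ := tsum_nonneg (lagWeight_nonneg _)
  refine ⟨2 * (C ^ 2 * B * Zc) * Zσ, fun h hh k hk => ?_⟩
  set P := (C * (h : ℝ) ^ (d + ε)) ^ 2 * B * (k : ℝ) ^ (-(1 - 5 * ε))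
  have hP : 0 ≤ P := mul_nonneg (mul_nonneg (sq_nonneg _) hB0) (by positivity)
  calc _ ≤ 2 * (∑' j : ℕ, P * ((k + 1 + j : ℕ) : ℝ) ^ (-(1 + ε))) * Zσ :=
        abs_tsum_tsum_le_of_abs_le ((summable_rpow_natCast_add hp _).mul_left P)
          (fun j => mul_nonneg hP (by positivity)) (summable_lagWeight hp) (lagWeight_nonneg _)
          (lagWeight_neg _) fun j l => (abs_mul_mul_le_of_decay hd0.le hε.le hεd hB0
            (fun j hj => hC j hj h hh) hB hk j l).trans_eq (by ring)
    _ ≤ 2 * (P * Zc) * Zσ := by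
        rw [tsum_mul_left]
        gcongr
        exact tsum_rpow_natCast_add_le hp _
    _ = 2 * (C ^ 2 * B * Zc) * Zσ * ((h : ℝ) ^ (d + ε)) ^ 2 * (k : ℝ) ^ (-(1 - 5 * ε)) := by ring
    _ ≤ 2 * (C ^ 2 * B * Zc) * Zσ * (h : ℝ) ^ (2 * d + δ) * (k : ℝ) ^ (-1 + δ) := by
        have hh1 : (1 : ℝ) ≤ h := by exact_mod_cast hh
        have hk1 : (1 : ℝ) ≤ k := by exact_mod_cast hk
        gcongr
        · rw [← rpow_natCast, ← rpow_mul (by positivity)]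
          exact rpow_le_rpow_of_exponent_le hh1 (by push_cast; linarith)
        · linarith

/-- Let `0 < d < 1/2`, let `σ` be even with `|σ m| ≤ C₃(δ) |m|^(2d-1+δ)` for
`m ≠ 0` (for every `δ > 0`), and suppose the coefficients `c j h` satisfy
`|c j h| ≤ C(δ) h^(d+δ) j^(-d-1+δ)`. Then for every `δ > 0` there is `C'` with
`|∑_{j,l>k} c j h * c l h * σ(j-l)| ≤ C' h^(2d+δ) k^(-1+δ)` for all `h ≥ 1`, `k ≥ 1`. -/
theorem stmt_19 (d : ℝ) (hd0 : 0 < d) (hd2 : d < 1 / 2)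
    (σ : ℤ → ℝ) (c : ℕ → ℕ → ℝ)
    (hσeven : ∀ m : ℤ, σ (-m) = σ m)
    (hσ : ∀ δ > (0 : ℝ), ∃ C₃ : ℝ, ∀ m : ℤ, m ≠ 0 →
      |σ m| ≤ C₃ * (|m| : ℝ) ^ (2 * d - 1 + δ))
    (hc : ∀ δ > (0 : ℝ), ∃ C : ℝ, ∀ j : ℕ, 1 ≤ j → ∀ h : ℕ, 1 ≤ h →
      |c j h| ≤ C * (h : ℝ) ^ (d + δ) * (j : ℝ) ^ (-d - 1 + δ)) :
    ∀ δ > (0 : ℝ), ∃ C' : ℝ, ∀ h : ℕ, 1 ≤ h → ∀ k : ℕ, 1 ≤ k →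
      |∑' j : ℕ, ∑' l : ℕ, c (k + 1 + j) h * c (k + 1 + l) h * σ ((j : ℤ) - l)|
        ≤ C' * (h : ℝ) ^ (2 * d + δ) * (k : ℝ) ^ (-1 + δ) :=
  stmt_19_general d hd0 hd2 σ c hσ hc
end
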